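/- arXiv:1207.2430 — 11 statements merged into one kernel-verified Lean document; each statement's English description precedes it below -/
import Mathlib

section
/- Let G = (V,E) be a connected bipartite graph with bipartition V = Y ∪ Z where Y ≠ ∅ and Z ≠ ∅. Then ∑_{F ⊆ E} (−1)^{|F|} · D((V,F), x) = (−1)^{|Y|} x^{|Z|} + (−1)^{|Z|} x^{|Y|}, where the sum ranges over all spanning subgraphs (V,F) of G. -/
open Finset Polynomial

variable {V : Type*}

def dominates (H : SimpleGraph V) (W : Finset V) : Prop :=
  ∀ v : V, v ∈ W ∨ ∃ u ∈ W, H.Adj u v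

open scoped Classical in
noncomputable def domPoly [Fintype V] (H : SimpleGraph V) : Polynomial ℤ :=
  ∑ W ∈ Finset.univ.powerset.filter (fun W => dominates H W), X ^ W.card

open scoped Classical in
noncomputable def compOrders [Fintype V] (H : SimpleGraph V) : Multiset ℕ :=
  (Finset.univ : Finset H.ConnectedComponent).val.map (fun c => Nat.card c.supp)

/-!
Exchanging the two sums, the coefficient of `x ^ |W|` is the signed count of the edge sets `F`
for which `W` dominates `(V, F)`. Inclusion–exclusion over the vertices left undominated turns
this into the signed count of the sets `T ⊆ V \ W` such that every edge of `G` joins `W` to `T`,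
that is, of the bipartitions `(W, T)` of `G`. A connected graph has exactly the two bipartitions
`(Y, Z)` and `(Z, Y)`, which contribute `(-1) ^ |Z| x ^ |Y|` and `(-1) ^ |Y| x ^ |Z|`.
-/

namespace Finset

variable {ι α R : Type*} [DecidableEq ι] [DecidableEq α] [Ring R]

theorem sum_powerset_neg_one_pow_card_eq_ite (s : Finset α) :
    ∑ t ∈ s.powerset, (-1 : R) ^ #t = if s = ∅ then 1 else 0 := by
  have := congrArg (Int.cast : ℤ → R) (sum_powerset_neg_one_pow_card (x := s))
  push_cast at this
  rw [this]

theorem sum_neg_one_pow_card_hitting_eq_sum_covering (E : Finset α) (s : Finset ι)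
    (A : ι → Finset α) :
    ∑ F ∈ E.powerset with ∀ i ∈ s, (F ∩ A i).Nonempty, (-1 : R) ^ #F
      = ∑ T ∈ s.powerset with E ⊆ T.biUnion A, (-1 : R) ^ #T := by
  calc ∑ F ∈ E.powerset with ∀ i ∈ s, (F ∩ A i).Nonempty, (-1 : R) ^ #F
      = ∑ F ∈ E.powerset, ∑ T ∈ {i ∈ s | Disjoint F (A i)}.powerset,
          (-1 : R) ^ #F * (-1) ^ #T := by
        rw [sum_filter]
        refine sum_congr rfl fun F _ => ?_
        simp [← mul_sum, sum_powerset_neg_one_pow_card_eq_ite, filter_eq_empty_iff,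
          not_disjoint_iff_nonempty_inter]
    _ = ∑ T ∈ s.powerset, ∑ F ∈ (E \ T.biUnion A).powerset, (-1 : R) ^ #F * (-1) ^ #T := by
        refine sum_comm' fun F T => ?_
        simp only [mem_powerset, subset_sdiff, disjoint_biUnion_right, subset_iff (s₁ := T),
          mem_filter]
        grind
    _ = ∑ T ∈ s.powerset with E ⊆ T.biUnion A, (-1 : R) ^ #T := by
        rw [sum_filter]
        refine sum_congr rfl fun T _ => ?_
        simp [← sum_mul, sum_powerset_neg_one_pow_card_eq_ite, sdiff_eq_empty_iff_subset]

end Finset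

theorem dominates_fromEdgeSet_iff [DecidableEq V] (F : Finset (Sym2 V)) (W : Finset V) :
    dominates (SimpleGraph.fromEdgeSet ↑F) W ↔ ∀ v ∉ W, ∃ u ∈ W, s(u, v) ∈ F := by
  refine forall_congr' fun v => ?_
  by_cases hv : v ∈ W
  · simp [hv]
  · simp only [hv, false_or, not_false_eq_true, forall_const, SimpleGraph.fromEdgeSet_adj,
      mem_coe]
    exact exists_congr fun u =>
      and_congr_right fun hu => and_iff_left (ne_of_mem_of_not_mem hu hv)

open scoped Classical in
theorem sum_mul_domPoly [Fintype V] {ι : Type*} (S : Finset ι) (c : ι → ℤ[X])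
    (H : ι → SimpleGraph V) :
    ∑ i ∈ S, c i * domPoly (H i)
      = ∑ W : Finset V, (∑ i ∈ S with dominates (H i) W, c i) * X ^ #W := by
  simp only [domPoly, powerset_univ, sum_filter, mul_sum, sum_mul, mul_ite, ite_mul, mul_zero,
    zero_mul]
  exact sum_comm

namespace SimpleGraph

section Bipartition

variable {G : SimpleGraph V} {s t s' t' : Set V}

theorem IsBipartiteWith.eq_of_preconnected (hG : G.Preconnected) (h : G.IsBipartiteWith s t)
    (h' : G.IsBipartiteWith s' t') {v : V} (hv : v ∈ s) (hv' : v ∈ s') : s = s' ∧ t = t' := by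
  have side_of_walk : ∀ a b (p : G.Walk a b),
      (a ∈ s ∧ a ∈ s') ∨ (a ∈ t ∧ a ∈ t') → (b ∈ s ∧ b ∈ s') ∨ (b ∈ t ∧ b ∈ t') := by
    intro a b p
    induction p with
    | nil => exact id
    | cons hadj _ ih =>
      rintro (⟨ha, ha'⟩ | ⟨ha, ha'⟩)
      · exact ih (Or.inr ⟨h.mem_of_mem_adj ha hadj, h'.mem_of_mem_adj ha' hadj⟩)
      · exact ih (Or.inl ⟨h.mem_of_mem_adj' ha hadj.symm, h'.mem_of_mem_adj' ha' hadj.symm⟩)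
  have side (w : V) : (w ∈ s ∧ w ∈ s') ∨ (w ∈ t ∧ w ∈ t') :=
    side_of_walk v w (hG v w).some (Or.inl ⟨hv, hv'⟩)
  have hst := Set.disjoint_left.mp h.disjoint
  have hst' := Set.disjoint_left.mp h'.disjoint
  refine ⟨Set.ext fun w => ?_, Set.ext fun w => ?_⟩ <;>
    have := side w <;> have := @hst w <;> have := @hst' w <;> tauto

theorem Preconnected.isBipartiteWith_iff (hG : G.Preconnected) (h : G.IsBipartiteWith s t)
    (hs : s.Nonempty) (ht : t.Nonempty) :
    G.IsBipartiteWith s' t' ↔ (s' = s ∧ t' = t) ∨ (s' = t ∧ t' = s) := by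
  refine ⟨fun h' => ?_, ?_⟩
  · obtain ⟨v, hv⟩ := hs
    obtain ⟨w, hw⟩ := ht
    have : Nontrivial V := nontrivial_of_ne v w (h.disjoint.ne_of_mem hv hw)
    obtain ⟨u, hvu⟩ := hG.exists_adj_of_nontrivial v
    rcases h'.mem_of_adj hvu with ⟨hv', -⟩ | ⟨hv', -⟩
    · obtain ⟨rfl, rfl⟩ := h.eq_of_preconnected hG h' hv hv'
      exact Or.inl ⟨rfl, rfl⟩
    · obtain ⟨rfl, rfl⟩ := h.eq_of_preconnected hG h'.symm hv hv'
      exact Or.inr ⟨rfl, rfl⟩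
  · rintro (⟨rfl, rfl⟩ | ⟨rfl, rfl⟩)
    exacts [h, h.symm]

end Bipartition

variable [Fintype V] [DecidableEq V] (G : SimpleGraph V) [DecidableRel G.Adj]

theorem isBipartiteWith_iff_edgeFinset_subset (W T : Finset V) :
    G.IsBipartiteWith ↑W ↑T ↔
      T ⊆ univ \ W ∧ G.edgeFinset ⊆ T.biUnion fun v => W.image (s(·, v)) := by
  have cover (a b : V) : s(a, b) ∈ T.biUnion (fun v => W.image (s(·, v))) ↔
      (a ∈ W ∧ b ∈ T) ∨ (a ∈ T ∧ b ∈ W) := by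
    simp only [mem_biUnion, mem_image, Sym2.eq_iff]
    grind
  rw [subset_sdiff, disjoint_comm, ← disjoint_coe]
  simp only [subset_univ, true_and, Finset.subset_iff (s₁ := G.edgeFinset), Sym2.forall,
    mem_edgeFinset, mem_edgeSet, cover]
  exact ⟨fun h => ⟨h.disjoint, h.mem_of_adj⟩, fun h => ⟨h.1, h.2⟩⟩

open scoped Classical in
theorem sum_neg_one_pow_card_dominates_fromEdgeSet {R : Type*} [Ring R] (W : Finset V) :
    ∑ F ∈ G.edgeFinset.powerset with dominates (fromEdgeSet (SetLike.coe F)) W, (-1 : R) ^ #F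
      = ∑ T : Finset V with G.IsBipartiteWith W (SetLike.coe T), (-1 : R) ^ #T := by
  have dominates_iff_hits (F : Finset (Sym2 V)) : dominates (fromEdgeSet ↑F) W ↔
      ∀ v ∈ univ \ W, (F ∩ W.image (s(·, v))).Nonempty := by
    simp [dominates_fromEdgeSet_iff, Finset.Nonempty, and_comm]
  convert sum_neg_one_pow_card_hitting_eq_sum_covering (R := R) G.edgeFinset (univ \ W)
    fun v => W.image (s(·, v)) using 2
  · ext F
    simp only [mem_filter, dominates_iff_hits]
  · ext T
    simp [isBipartiteWith_iff_edgeFinset_subset]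

end SimpleGraph

theorem stmt_1_general [Fintype V] [DecidableEq V] (G : SimpleGraph V) [DecidableRel G.Adj]
    (Y Z : Finset V) (hY : Y.Nonempty) (hZ : Z.Nonempty)
    (hDisj : Disjoint Y Z)
    (hBip : ∀ u v : V, G.Adj u v → (u ∈ Y ∧ v ∈ Z) ∨ (u ∈ Z ∧ v ∈ Y))
    (hConn : G.Connected) :
    ∑ F ∈ G.edgeFinset.powerset,
        (-1 : Polynomial ℤ) ^ F.card * domPoly (SimpleGraph.fromEdgeSet (↑F : Set (Sym2 V)))
      = (-1 : Polynomial ℤ) ^ Y.card * X ^ Z.card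
        + (-1 : Polynomial ℤ) ^ Z.card * X ^ Y.card := by
  classical
  have hbip : G.IsBipartiteWith Y Z := ⟨disjoint_coe.mpr hDisj, hBip⟩
  have bipartitions :
      ({p : Finset V × Finset V | G.IsBipartiteWith p.1 (SetLike.coe p.2)} : Finset _)
        = {(Y, Z), (Z, Y)} := by
    ext ⟨W, T⟩
    simp [hConn.preconnected.isBipartiteWith_iff hbip hY hZ]
  have hne : (Y, Z) ≠ (Z, Y) := by
    rw [Ne, Prod.mk.injEq, not_and]
    rintro rfl -
    exact hY.ne_empty (disjoint_self_iff_empty _ |>.mp hDisj)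
  rw [sum_mul_domPoly]
  calc ∑ W : Finset V, (∑ F ∈ G.edgeFinset.powerset with
          dominates (SimpleGraph.fromEdgeSet (SetLike.coe F)) W, (-1 : ℤ[X]) ^ #F) * X ^ #W
      = ∑ p : Finset V × Finset V with G.IsBipartiteWith p.1 (SetLike.coe p.2),
          (-1 : ℤ[X]) ^ #p.2 * X ^ #p.1 := by
        simp_rw [SimpleGraph.sum_neg_one_pow_card_dominates_fromEdgeSet, sum_filter, sum_mul,
          ite_mul, zero_mul, Fintype.sum_prod_type]
    _ = _ := by
        rw [bipartitions, sum_pair hne, add_comm]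

/-- alternating sum of domination polynomials of spanning subgraphs of a
connected bipartite graph. -/
theorem stmt_1 [Fintype V] [DecidableEq V] (G : SimpleGraph V) [DecidableRel G.Adj]
    (Y Z : Finset V) (hY : Y.Nonempty) (hZ : Z.Nonempty)
    (hUnion : Y ∪ Z = Finset.univ) (hDisj : Disjoint Y Z)
    (hBip : ∀ u v : V, G.Adj u v → (u ∈ Y ∧ v ∈ Z) ∨ (u ∈ Z ∧ v ∈ Y))
    (hConn : G.Connected) :
    ∑ F ∈ G.edgeFinset.powerset,
        (-1 : Polynomial ℤ) ^ F.card * domPoly (SimpleGraph.fromEdgeSet (↑F : Set (Sym2 V)))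
      = (-1 : Polynomial ℤ) ^ Y.card * X ^ Z.card
        + (-1 : Polynomial ℤ) ^ Z.card * X ^ Y.card :=
  stmt_1_general G Y Z hY hZ hDisj hBip hConn
end

section
/- Let G = (V,E) be a graph. Then ∑_{F ⊆ E} (−1)^{|F|} D((V,F), x) ≠ 0 (as a polynomial in x) if and only if G is bipartite. -/
/-!
Expanding `D((V,F), x)` and exchanging sums, the coefficient of `x^|W|` is the signed count
`∑ (-1)^|F|` over the edge sets `F` in which `W` dominates. An edge with both ends in `W` or
both outside `W` can be toggled without affecting domination, so this vanishes unless every edge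
joins `W` to its complement. In that case the edges split into the disjoint stars of the vertices
`v ∉ W`, the signed count factors over them, and each star contributes
`∑_{∅ ≠ S ⊆ star v} (-1)^|S| = -1` if `v` is not isolated and `0` otherwise. Hence the
polynomial is `∑ (-1)^|V \ W| x^|W|` over the sides `W` of bipartitions that dominate `G`; its
value at `x = -1` is `(-1)^|V|` times the number of such `W`, and one exists iff `G` is
bipartite.
-/

open Finset Polynomial

variable {V : Type*}

namespace Finset

variable {α ι R : Type*} [DecidableEq α]

theorem sum_filter_powerset_neg_one_pow_eq_zero [Ring R] {s : Finset α} {a : α} (ha : a ∈ s)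
    {p : Finset α → Prop} [DecidablePred p] (hp : ∀ t, p (insert a t) ↔ p t) :
    ∑ t ∈ s.powerset with p t, (-1 : R) ^ #t = 0 := by
  rw [sum_filter, ← insert_erase ha, sum_powerset_insert (notMem_erase a s), ← sum_add_distrib]
  refine sum_eq_zero fun t ht => ?_
  have hat : a ∉ t := fun h => notMem_erase a s (mem_powerset.mp ht h)
  simp only [hp, card_insert_of_notMem hat, pow_succ]
  split_ifs <;> simp

theorem sum_powerset_ite_nonempty_neg_one_pow [Ring R] (s : Finset α) :
    ∑ t ∈ s.powerset, (if t.Nonempty then (-1 : R) ^ #t else 0) =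
      if s.Nonempty then -1 else 0 := by
  have h := congrArg (Int.cast : ℤ → R) (sum_powerset_neg_one_pow_card (x := s))
  rw [← add_sum_erase _ _ (empty_mem_powerset s)] at h ⊢
  rw [sum_congr rfl fun t ht => if_pos (nonempty_iff_ne_empty.mpr (ne_of_mem_erase ht))]
  push_cast at h
  rcases s.eq_empty_or_nonempty with rfl | hs
  · simp
  · simp only [hs.ne_empty, if_false, card_empty, pow_zero] at h
    simp only [not_nonempty_empty, if_false, hs, if_true, zero_add]
    exact eq_neg_iff_add_eq_zero.mpr (by rwa [add_comm])

theorem sum_powerset_union_inter_mul [CommSemiring R] {s t : Finset α} (hst : Disjoint s t)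
    (f g : Finset α → R) :
    ∑ u ∈ (s ∪ t).powerset, f (u ∩ s) * g (u ∩ t) =
      (∑ a ∈ s.powerset, f a) * ∑ b ∈ t.powerset, g b := by
  rw [sum_mul_sum, ← sum_product']
  refine sum_nbij' (fun u => (u ∩ s, u ∩ t)) (fun p => p.1 ∪ p.2) ?_ ?_ ?_ ?_ ?_
  · intro u _; simp
  · intro p hp
    simp only [mem_product, mem_powerset] at hp ⊢
    exact union_subset_union hp.1 hp.2
  · intro u hu
    simp only [mem_powerset] at hu
    simp [← inter_union_distrib_left, inter_eq_left.mpr hu]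
  · intro p hp
    simp only [mem_product, mem_powerset] at hp
    have h1 := hst.mono_right hp.2
    have h2 := hst.symm.mono_right hp.1
    simp [union_inter_distrib_right, inter_eq_left.mpr hp.1, inter_eq_left.mpr hp.2,
      disjoint_iff_inter_eq_empty.mp h1.symm, disjoint_iff_inter_eq_empty.mp h2.symm]
  · intro u _; rfl

theorem sum_powerset_biUnion_prod_inter [CommSemiring R] [DecidableEq ι] {S : Finset ι}
    {A : ι → Finset α} (hA : (S : Set ι).PairwiseDisjoint A) (f : ι → Finset α → R) :
    ∑ u ∈ (S.biUnion A).powerset, ∏ i ∈ S, f i (u ∩ A i) =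
      ∏ i ∈ S, ∑ a ∈ (A i).powerset, f i a := by
  induction S using Finset.induction_on with
  | empty => simp
  | @insert x S hx ih =>
    have hdisj : Disjoint (A x) (S.biUnion A) := by
      rw [disjoint_biUnion_right]
      exact fun i hi =>
        hA (mem_insert_self x S) (mem_insert_of_mem hi) (ne_of_mem_of_not_mem hi hx).symm
    have hrestrict (u : Finset α) :
        ∏ i ∈ S, f i (u ∩ A i) = ∏ i ∈ S, f i (u ∩ S.biUnion A ∩ A i) :=
      prod_congr rfl fun i hi => by
        rw [inter_assoc, inter_eq_right.mpr (subset_biUnion_of_mem A hi)]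
    rw [biUnion_insert, prod_insert hx, ← ih (hA.subset (by simp)),
      ← sum_powerset_union_inter_mul hdisj]
    exact sum_congr rfl fun u _ => by rw [prod_insert hx, hrestrict]

end Finset

open SimpleGraph

def IsDominatingSide (G : SimpleGraph V) (W : Finset V) : Prop :=
  G.IsBipartiteWith ↑W (↑W)ᶜ ∧ dominates G W

theorem isBipartiteWith_coe_compl_iff {G : SimpleGraph V} {W : Finset V} :
    G.IsBipartiteWith ↑W (↑W)ᶜ ↔ ∀ ⦃v w⦄, G.Adj v w → (v ∈ W ↔ w ∉ W) := by
  refine ⟨fun h v w hvw => ?_, fun h => ⟨disjoint_compl_right, fun v w hvw => ?_⟩⟩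
  · have := h.mem_of_adj hvw
    simp only [mem_coe, Set.mem_compl_iff] at this
    tauto
  · have := h hvw
    simp only [mem_coe, Set.mem_compl_iff]
    tauto

theorem exists_isDominatingSide_iff [Fintype V] (G : SimpleGraph V) :
    (∃ W, IsDominatingSide G W) ↔ G.IsBipartite := by
  refine ⟨fun ⟨W, hW, _⟩ => hW.isBipartite, fun h => ?_⟩
  obtain ⟨s, t, hst⟩ := h.exists_isBipartiteWith
  have hmem {v w : V} (hvw : G.Adj v w) : (v ∈ s ↔ w ∉ s) := by
    have := Set.disjoint_left.mp hst.disjoint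
    rcases hst.mem_of_adj hvw with ⟨hv, hw⟩ | ⟨hv, hw⟩ <;> grind
  classical
  -- isolated vertices must lie in `W`, since nothing else can dominate them
  refine ⟨({v | v ∈ s ∨ ∀ u, ¬ G.Adj u v} : Finset V),
    isBipartiteWith_coe_compl_iff.mpr fun v w hvw => ?_, fun v => ?_⟩
  · simp only [mem_filter, mem_univ, true_and]
    have := hmem hvw
    grind [G.adj_symm hvw]
  · simp only [mem_filter, mem_univ, true_and]
    by_cases hv : v ∈ s ∨ ∀ u, ¬ G.Adj u v
    · exact Or.inl hv
    · simp only [not_or, not_forall, not_not] at hv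
      obtain ⟨hvs, u, hu⟩ := hv
      exact Or.inr ⟨u, Or.inl ((hmem hu).mpr hvs), hu⟩

theorem dominates_fromEdgeSet_insert {s : Set (Sym2 V)} {W : Finset V} {x y : V}
    (h : x ∈ W ↔ y ∈ W) :
    dominates (fromEdgeSet (insert s(x, y) s)) W ↔ dominates (fromEdgeSet s) W := by
  refine forall_congr' fun v => or_congr_right' fun hv => exists_congr fun u =>
    and_congr_right fun hu => ?_
  simp only [fromEdgeSet_adj, Set.mem_insert_iff, Sym2.eq_iff]
  have : ¬ ((u = x ∧ v = y) ∨ (u = y ∧ v = x)) := by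
    rintro (⟨rfl, rfl⟩ | ⟨rfl, rfl⟩) <;> tauto
  tauto

section

variable [Fintype V] [DecidableEq V] (G : SimpleGraph V) [DecidableRel G.Adj] (W : Finset V)
  {R : Type*} [CommRing R]

open scoped Classical in
theorem sum_dominates_eq_zero_of_adj {x y : V} (hxy : G.Adj x y) (h : x ∈ W ↔ y ∈ W) :
    ∑ F ∈ G.edgeFinset.powerset with dominates (fromEdgeSet (F : Finset (Sym2 V))) W,
      (-1 : R) ^ #F = 0 :=
  sum_filter_powerset_neg_one_pow_eq_zero (mem_edgeFinset.mpr hxy) fun F => by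
    rw [coe_insert, dominates_fromEdgeSet_insert h]

variable {G W}

theorem edgeFinset_eq_biUnion_incidenceFinset (hW : G.IsBipartiteWith ↑W (↑W)ᶜ) :
    G.edgeFinset = Wᶜ.biUnion (fun v => G.incidenceFinset v) := by
  rw [isBipartiteWith_coe_compl_iff] at hW
  ext e
  induction e using Sym2.ind with
  | _ x y =>
    simp only [mem_edgeFinset, mem_edgeSet, mem_biUnion, mem_compl, mem_incidenceFinset,
      mk'_mem_incidenceSet_iff]
    constructor
    · intro hxy
      by_cases hx : x ∈ W
      · exact ⟨y, (hW hxy).mp hx, hxy, Or.inr rfl⟩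
      · exact ⟨x, hx, hxy, Or.inl rfl⟩
    · rintro ⟨_, _, hxy, _⟩
      exact hxy

theorem pairwiseDisjoint_incidenceFinset (hW : G.IsBipartiteWith ↑W (↑W)ᶜ) :
    (↑Wᶜ : Set V).PairwiseDisjoint (fun v => G.incidenceFinset v) := by
  rw [isBipartiteWith_coe_compl_iff] at hW
  intro v hv w hw hvw
  simp only [coe_compl, Set.mem_compl_iff, mem_coe] at hv hw
  rw [Function.onFun, ← disjoint_coe, coe_incidenceFinset, coe_incidenceFinset,
    Set.disjoint_iff_inter_eq_empty]
  exact G.incidenceSet_inter_incidenceSet_of_not_adj (fun h => hv ((hW h).mpr hw)) hvw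

theorem dominates_fromEdgeSet_iff_s3 (hW : G.IsBipartiteWith ↑W (↑W)ᶜ) {F : Finset (Sym2 V)}
    (hF : F ⊆ G.edgeFinset) :
    dominates (fromEdgeSet (↑F : Set (Sym2 V))) W ↔
      ∀ v ∈ Wᶜ, (F ∩ G.incidenceFinset v).Nonempty := by
  rw [isBipartiteWith_coe_compl_iff] at hW
  refine forall_congr' fun v => ?_
  by_cases hv : v ∈ W
  · simp [hv]
  simp only [hv, false_or, mem_compl, not_false_eq_true, forall_const, fromEdgeSet_adj, mem_coe]
  constructor
  · rintro ⟨u, hu, huv, -⟩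
    exact ⟨s(u, v), mem_inter.mpr ⟨huv, (mem_incidenceFinset _ _ _).mpr
      ⟨mem_edgeFinset.mp (hF huv), Sym2.mem_mk_right u v⟩⟩⟩
  · rintro ⟨e, he⟩
    obtain ⟨heF, heG⟩ := mem_inter.mp he
    obtain ⟨hadj, hve⟩ := (mem_incidenceFinset _ _ _).mp heG
    obtain ⟨u, rfl⟩ := Sym2.mem_iff_exists.mp hve
    have hvu : G.Adj v u := hadj
    refine ⟨u, not_not.mp ((hW hvu).not.mp hv), ?_, hvu.ne.symm⟩
    rwa [Sym2.eq_swap]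

open scoped Classical in
theorem sum_dominates_of_isBipartiteWith (hW : G.IsBipartiteWith ↑W (↑W)ᶜ) :
    ∑ F ∈ G.edgeFinset.powerset with dominates (fromEdgeSet (F : Finset (Sym2 V))) W,
        (-1 : R) ^ #F = if dominates G W then (-1) ^ #Wᶜ else 0 := by
  have hE := edgeFinset_eq_biUnion_incidenceFinset hW
  have hA := pairwiseDisjoint_incidenceFinset hW
  have hsummand : ∀ F ∈ G.edgeFinset.powerset,
      (if dominates (fromEdgeSet (F : Finset (Sym2 V))) W then (-1 : R) ^ #F else 0) =
        ∏ v ∈ Wᶜ, if (F ∩ G.incidenceFinset v).Nonempty then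
          (-1 : R) ^ #(F ∩ G.incidenceFinset v) else 0 := by
    intro F hF
    rw [mem_powerset] at hF
    have hcard : ∑ v ∈ Wᶜ, #(F ∩ G.incidenceFinset v) = #F := by
      rw [← card_biUnion (hA.mono fun v => inter_subset_right), ← inter_biUnion, ← hE,
        inter_eq_left.mpr hF]
    simp only [prod_ite_zero, prod_pow_eq_pow_sum, hcard, dominates_fromEdgeSet_iff_s3 hW hF]
  have hdom : dominates G W ↔ ∀ v ∈ Wᶜ, (G.incidenceFinset v).Nonempty := by
    have := dominates_fromEdgeSet_iff_s3 hW (subset_refl G.edgeFinset)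
    simpa only [coe_edgeFinset, fromEdgeSet_edgeSet,
      inter_eq_right.mpr (G.incidenceFinset_subset _)] using this
  rw [sum_filter, sum_congr rfl hsummand, hE,
    sum_powerset_biUnion_prod_inter hA fun _ a => if a.Nonempty then (-1 : R) ^ #a else 0]
  simp only [sum_powerset_ite_nonempty_neg_one_pow, prod_ite_zero, prod_const, hdom]

open scoped Classical in
theorem sum_dominates_eq_ite :
    ∑ F ∈ G.edgeFinset.powerset with dominates (fromEdgeSet (F : Finset (Sym2 V))) W,
        (-1 : R) ^ #F = if IsDominatingSide G W then (-1) ^ #Wᶜ else 0 := by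
  by_cases hW : G.IsBipartiteWith ↑W (↑W)ᶜ
  · simp only [sum_dominates_of_isBipartiteWith hW, IsDominatingSide, hW, true_and]
  · obtain ⟨x, y, hxy, h⟩ : ∃ x y, G.Adj x y ∧ (x ∈ W ↔ y ∈ W) := by
      simp only [isBipartiteWith_coe_compl_iff, not_forall] at hW
      obtain ⟨x, y, hxy, h⟩ := hW
      exact ⟨x, y, hxy, by tauto⟩
    rw [sum_dominates_eq_zero_of_adj G W hxy h, if_neg fun h' => hW h'.1]

variable (G) in
open scoped Classical in
theorem sum_neg_one_pow_mul_domPoly :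
    ∑ F ∈ G.edgeFinset.powerset,
        (-1 : ℤ[X]) ^ #F * domPoly (fromEdgeSet (↑F : Set (Sym2 V))) =
      ∑ W ∈ univ.powerset with IsDominatingSide G W, (-1) ^ #Wᶜ * X ^ #W := by
  simp only [domPoly, mul_sum]
  rw [sum_comm' (t' := univ.powerset)
    (s' := fun W => G.edgeFinset.powerset.filter fun F : Finset (Sym2 V) =>
      dominates (fromEdgeSet ↑F) W)
    (by simp)]
  refine (sum_congr rfl fun W _ => ?_).trans (sum_filter _ _).symm
  rw [← sum_mul, sum_dominates_eq_ite, ite_mul, zero_mul]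

end

theorem sum_neg_one_pow_card_compl_mul_X_pow_ne_zero_iff {α : Type*} [Fintype α] [DecidableEq α]
    (𝒜 : Finset (Finset α)) :
    ∑ s ∈ 𝒜, (-1 : ℤ[X]) ^ #sᶜ * X ^ #s ≠ 0 ↔ 𝒜.Nonempty := by
  refine ⟨nonempty_of_sum_ne_zero, fun h𝒜 h0 => ?_⟩
  have h := congrArg (eval (-1)) h0
  simp only [eval_finsetSum, eval_mul, eval_pow, eval_neg, eval_one, eval_X, ← pow_add,
    card_compl_add_card, sum_const, eval_zero, nsmul_eq_mul] at h
  exact mul_ne_zero (Nat.cast_ne_zero.mpr h𝒜.card_pos.ne') (pow_ne_zero _ (by norm_num)) h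

theorem stmt_3_general [Fintype V] (G : SimpleGraph V) [DecidableRel G.Adj] :
    (∑ F ∈ G.edgeFinset.powerset,
        (-1 : Polynomial ℤ) ^ F.card * domPoly (SimpleGraph.fromEdgeSet (↑F : Set (Sym2 V))))
      ≠ 0 ↔ G.Colorable 2 := by
  classical
  rw [sum_neg_one_pow_mul_domPoly, sum_neg_one_pow_card_compl_mul_X_pow_ne_zero_iff,
    filter_nonempty_iff]
  simpa only [mem_powerset, subset_univ, true_and] using exists_isDominatingSide_iff G

/-- the alternating sum over spanning subgraphs is nonzero iff `G` is
bipartite (i.e. 2-colorable). -/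
theorem stmt_3 [Fintype V] [DecidableEq V] (G : SimpleGraph V) [DecidableRel G.Adj] :
    (∑ F ∈ G.edgeFinset.powerset,
        (-1 : Polynomial ℤ) ^ F.card * domPoly (SimpleGraph.fromEdgeSet (↑F : Set (Sym2 V))))
      ≠ 0 ↔ G.Colorable 2 :=
  stmt_3_general G
end

section
/- Let G = (V,E) be a graph and A ⊆ E an edge subset such that the spanning subgraph (V,A) contains an odd cycle. Then ∑_{F ⊆ A} (−1)^{|F|} D(G − F, x) = 0, where G − F denotes the graph (V, E ∖ F). -/
/-!
Expand each `D(G - F, x)` as a sum over vertex sets `W` and exchange the two sums. Whether `W`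
dominates `G - F` depends only on the edges of `G - F` between `W` and its complement. Since
`(V, A)` has an odd cycle, `W` does not 2-colour it, so some edge `e ∈ A` has both ends on the same
side of `W`; adding or removing `e` from `F` then preserves domination by `W` and flips the sign, so
the terms for each fixed `W` cancel in pairs.
-/

open Finset Polynomial

variable {V : Type*}

theorem Finset.sum_powerset_neg_one_pow_card_mul_eq_zero {α R : Type*} [DecidableEq α] [Ring R]
    {s : Finset α} {a : α} (ha : a ∈ s) (f : Finset α → R)
    (hf : ∀ t ⊆ s.erase a, f (insert a t) = f t) :
    ∑ t ∈ s.powerset, (-1 : R) ^ #t * f t = 0 := by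
  rw [← insert_erase ha, sum_powerset_insert (notMem_erase a s), ← sum_add_distrib]
  refine sum_eq_zero fun t ht => ?_
  have hat : a ∉ t := fun h => notMem_erase a s (mem_powerset.1 ht h)
  rw [card_insert_of_notMem hat, hf t (mem_powerset.1 ht), pow_succ]
  noncomm_ring

theorem SimpleGraph.Walk.exists_adj_mem_iff_mem_of_odd_length {G : SimpleGraph V} {u : V}
    (p : G.Walk u u) (hp : Odd p.length) (s : Set V) :
    ∃ a b, G.Adj a b ∧ (a ∈ s ↔ b ∈ s) := by
  classical
  by_contra hcross
  let c : G.Coloring Bool := Coloring.mk (fun v => decide (v ∈ s)) fun {a b} hab => by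
    simp only [ne_eq, decide_eq_decide]
    exact fun h => hcross ⟨a, b, hab, h⟩
  exact iff_not_self ((c.odd_length_iff_not_congr p).1 hp).symm

theorem dominates_deleteEdges_insert_iff (H : SimpleGraph V) {W : Finset V} {F : Set (Sym2 V)}
    {a b : V} (hab : a ∈ W ↔ b ∈ W) :
    dominates (H.deleteEdges (insert s(a, b) F)) W ↔ dominates (H.deleteEdges F) W := by
  have hne : ∀ u ∈ W, ∀ v ∉ W, s(u, v) ≠ s(a, b) := by
    intro u hu v hv huv
    rcases Sym2.eq_iff.1 huv with ⟨rfl, rfl⟩ | ⟨rfl, rfl⟩ <;> tauto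
  refine forall_congr' fun v => or_congr_right' fun hv => exists_congr fun u => ?_
  refine and_congr_right fun hu => ?_
  simp only [SimpleGraph.deleteEdges_adj, Set.mem_insert_iff, hne u hu v hv, false_or]

open scoped Classical in
theorem domPoly_eq_sum [Fintype V] (H : SimpleGraph V) :
    domPoly H = ∑ W ∈ univ.powerset, if dominates H W then X ^ #W else 0 := by
  rw [domPoly, sum_filter]

theorem stmt_4_general [Fintype V] (G : SimpleGraph V)
    (A : Finset (Sym2 V))
    (hodd : ∃ (v : V) (w : (SimpleGraph.fromEdgeSet (↑A : Set (Sym2 V))).Walk v v),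
      w.IsCycle ∧ Odd w.length) :
    ∑ F ∈ A.powerset,
        (-1 : Polynomial ℤ) ^ F.card * domPoly (G.deleteEdges (↑F : Set (Sym2 V))) = 0 := by
  classical
  obtain ⟨v, w, -, hw⟩ := hodd
  simp_rw [domPoly_eq_sum, mul_sum]
  rw [sum_comm]
  refine sum_eq_zero fun W _ => ?_
  obtain ⟨a, b, hab, hW⟩ := w.exists_adj_mem_iff_mem_of_odd_length hw W
  refine sum_powerset_neg_one_pow_card_mul_eq_zero ((SimpleGraph.fromEdgeSet_adj _).1 hab).1 _
    fun F _ => ?_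
  rw [coe_insert, dominates_deleteEdges_insert_iff G hW]

/-- if the spanning subgraph `(V,A)` contains an odd cycle, then the
alternating sum of `D(G - F, x)` over `F ⊆ A` vanishes. -/
theorem stmt_4 [Fintype V] [DecidableEq V] (G : SimpleGraph V) [DecidableRel G.Adj]
    (A : Finset (Sym2 V)) (hA : ↑A ⊆ G.edgeSet)
    (hodd : ∃ (v : V) (w : (SimpleGraph.fromEdgeSet (↑A : Set (Sym2 V))).Walk v v),
      w.IsCycle ∧ Odd w.length) :
    ∑ F ∈ A.powerset,
        (-1 : Polynomial ℤ) ^ F.card * domPoly (G.deleteEdges (↑F : Set (Sym2 V))) = 0 :=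
  stmt_4_general G A hodd
end

section
/- For any finite graph G, the number d(G) of dominating sets of G is odd. -/
/-
Count, modulo 2, the pairs (A, B) of vertex sets such that no vertex of A equals or is adjacent
to a vertex of B. For fixed A, the admissible B are exactly the subsets of the set of vertices not
dominated by A, so A contributes a power of 2 that is odd iff A is dominating: the count is
≡ d(G). On the other hand the relation is symmetric, and swapping A and B is an involution whose
only fixed point is (∅, ∅): the count is odd.
-/

open Finset Polynomial

variable {V : Type*}

theorem Finset.card_modEq_card_filter_apply_eq_self_of_involution {α : Type*} [DecidableEq α]
    {s : Finset α} (g : α → α) (hg_mem : ∀ a ∈ s, g a ∈ s)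
    (hg_invol : ∀ a ∈ s, g (g a) = a) :
    #s ≡ #{a ∈ s | g a = a} [MOD 2] := by
  have hfree : (#{a ∈ s | ¬g a = a} : ZMod 2) = 0 := by
    rw [card_filter, Nat.cast_sum]
    refine sum_involution (fun a _ => g a) (fun a ha => ?_)
      (fun _ _ hne hfix => hne (by simp [hfix])) hg_mem hg_invol
    by_cases hfix : g a = a
    · simp [hfix]
    · have : g (g a) ≠ g a := by rwa [hg_invol a ha, ne_comm]
      simp only [hfix, this]
      decide
  rw [← ZMod.natCast_eq_natCast_iff, ← card_filter_add_card_filter_not (fun a => g a = a),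
    Nat.cast_add, hfree, add_zero]

namespace SimpleGraph

variable [Fintype V] [DecidableEq V] (G : SimpleGraph V) [DecidableRel G.Adj]

def undominated (A : Finset V) : Finset V := {v | v ∉ A ∧ ∀ u ∈ A, ¬G.Adj u v}

theorem undominated_eq_empty_iff {A : Finset V} : G.undominated A = ∅ ↔ dominates G A := by
  simp [undominated, Finset.eq_empty_iff_forall_notMem, dominates, or_iff_not_imp_left]

theorem subset_undominated_iff {A B : Finset V} :
    B ⊆ G.undominated A ↔ ∀ a ∈ A, ∀ b ∈ B, a ≠ b ∧ ¬G.Adj a b := by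
  simp only [undominated, subset_iff, mem_filter, mem_univ, true_and]
  grind

def separatedPairs : Finset (Finset V × Finset V) :=
  {p | ∀ a ∈ p.1, ∀ b ∈ p.2, a ≠ b ∧ ¬G.Adj a b}

theorem card_separatedPairs : #G.separatedPairs = ∑ A : Finset V, 2 ^ #(G.undominated A) := by
  simp_rw [separatedPairs, ← G.subset_undominated_iff, card_filter, Fintype.sum_prod_type,
    ← card_powerset, ← filter_subset_univ, card_filter]

theorem card_separatedPairs_modEq : #G.separatedPairs ≡ 1 [MOD 2] := by
  have hswap {p} (hp : p ∈ G.separatedPairs) : p.swap ∈ G.separatedPairs := by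
    simp only [separatedPairs, mem_filter, mem_univ, true_and] at hp ⊢
    exact fun b hb a ha => ⟨(hp a ha b hb).1.symm, fun h => (hp a ha b hb).2 h.symm⟩
  have hdiag : {p ∈ G.separatedPairs | p.swap = p} = {(∅, ∅)} := by
    ext ⟨A, B⟩
    simp only [separatedPairs, mem_filter, mem_univ, true_and, Prod.swap_prod_mk, Prod.mk.injEq,
      mem_singleton]
    constructor
    · rintro ⟨hp, rfl, -⟩
      have : B = ∅ := eq_empty_of_forall_notMem fun b hb => (hp b hb b hb).1 rfl
      exact ⟨this, this⟩
    · rintro ⟨rfl, rfl⟩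
      simp
  simpa [hdiag] using card_modEq_card_filter_apply_eq_self_of_involution Prod.swap
    (fun _ => hswap) (fun p _ => p.swap_swap)

theorem sum_two_pow_card_undominated_modEq [DecidablePred (dominates G)] :
    ∑ A : Finset V, 2 ^ #(G.undominated A) ≡
      #{W ∈ univ.powerset | dominates G W} [MOD 2] := by
  have htwo : (2 : ZMod 2) = 0 := rfl
  rw [← ZMod.natCast_eq_natCast_iff, card_filter, powerset_univ]
  push_cast
  refine sum_congr rfl fun A _ => ?_
  simp only [htwo, zero_pow_eq, card_eq_zero, G.undominated_eq_empty_iff]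

end SimpleGraph

open scoped Classical in
/-- the number of dominating sets of any finite graph is odd. -/
theorem stmt_5 [Fintype V] (G : SimpleGraph V) :
    Odd (Finset.univ.powerset.filter (fun W => dominates G W)).card := by
  rw [Nat.odd_iff]
  calc #{W ∈ univ.powerset | dominates G W}
      ≡ ∑ A, 2 ^ #(G.undominated A) [MOD 2] := G.sum_two_pow_card_undominated_modEq.symm
    _ = #G.separatedPairs := G.card_separatedPairs.symm
    _ ≡ 1 [MOD 2] := G.card_separatedPairs_modEq
end

section
/- Let G = (V,E) be a graph. Then D(G,−1) = (−1)^{|V|} · ∑_{F ⊆ E, (V,F) bipartite} (−1)^{|F|} 2^{c(F)}, where c(F) denotes the number of connected components of (V,F) that contain at least one edge. -/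
open Finset Polynomial

variable {V : Type*}

/-!
At `-1` the domination polynomial is the signed count `∑ (-1)^|A|` of dominating sets `A`. Since
`∑_{B ⊆ X} (-1)^|B| = [X = ∅]` and `A` dominates iff no vertex lies outside `A` and its
neighbourhood, this is the signed count of pairs `(A, B)` of disjoint sets with no edge of `G`
between them. Expanding `[no edge between A and B]` in the same way over the sets `F` of edges
between `A` and `B` and exchanging the sums leaves, for each `F ⊆ E`, the signed count of pairs
`(A, B)` such that every edge of `F` joins `A` to `B`. For fixed `A` these `B` form an interval
of the Boolean lattice, so their signed count vanishes unless `A` is one side of a 2-colouring of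
`(V, F)` containing every isolated vertex, in which case `(A, B)` contributes `(-1)^|V|`. Such
sides differ from a fixed one by swapping the colours on some set of components with an edge, so
there are `2^{c(F)}` of them when `(V, F)` is bipartite.
-/

theorem Finset.sum_Icc_neg_one_pow_card {α : Type*} [DecidableEq α] (s t : Finset α) :
    ∑ u ∈ Icc s t, (-1 : ℤ) ^ #u = if s = t then (-1) ^ #s else 0 := by
  by_cases hst : s ⊆ t
  · have hdisj : ∀ u ∈ (t \ s).powerset, Disjoint s u := fun u hu =>
      disjoint_sdiff.mono_right (mem_powerset.1 hu)
    rw [Icc_eq_image_powerset hst, sum_image fun u hu v hv huv => by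
      rw [← union_sdiff_cancel_left (hdisj u hu), huv, union_sdiff_cancel_left (hdisj v hv)]]
    rw [sum_congr rfl fun u hu => by rw [card_union_of_disjoint (hdisj u hu), pow_add],
      ← mul_sum, sum_powerset_neg_one_pow_card]
    by_cases hts : t ⊆ s
    · rw [if_pos (sdiff_eq_empty_iff_subset.2 hts), if_pos (hst.antisymm hts), mul_one]
    · rw [if_neg (mt sdiff_eq_empty_iff_subset.1 hts), if_neg fun h => hts h.ge, mul_zero]
  · rw [Icc_eq_empty hst, sum_empty, if_neg fun h => hst h.le]

namespace SimpleGraph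

section

variable {G H : SimpleGraph V}

theorem between_eq_bot_iff {s t : Set V} :
    G.between s t = ⊥ ↔ ∀ u ∈ s, ∀ v ∈ t, ¬ G.Adj u v := by
  simp only [eq_bot_iff_forall_not_adj, between_adj]
  refine ⟨fun h u hu v hv huv => h u v ⟨huv, .inl ⟨hu, hv⟩⟩, ?_⟩
  rintro h u v ⟨huv, ⟨hu, hv⟩ | ⟨hu, hv⟩⟩
  exacts [h u hu v hv huv, h v hv u hu huv.symm]

theorem isBipartiteWith_iff_le_between {s t : Set V} (hHG : H ≤ G)
    (hst : Disjoint s t) : H.IsBipartiteWith s t ↔ H ≤ G.between s t :=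
  ⟨fun h _ _ huv => ⟨hHG huv, h.mem_of_adj huv⟩,
    fun h => ⟨hst, fun _ _ huv => (h huv).2⟩⟩

theorem fromEdgeSet_le_iff_of_subset_edgeSet {F : Set (Sym2 V)} (hF : F ⊆ G.edgeSet)
    {K : SimpleGraph V} : fromEdgeSet F ≤ K ↔ F ⊆ K.edgeSet := by
  have hdiag : Disjoint F Sym2.diagSet := Set.disjoint_left.2 fun e he hd =>
    G.not_isDiag_of_mem_edgeSet (hF he) hd
  rw [fromEdgeSet_le, sdiff_eq_left.2 hdiag]

theorem isBipartiteWith_compl_iff {s : Set V} :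
    H.IsBipartiteWith s sᶜ ↔ ∀ ⦃u v⦄, H.Adj u v → (u ∈ s ↔ v ∉ s) := by
  refine ⟨fun h u v huv => ?_, fun h => ⟨disjoint_compl_right, fun u v huv => ?_⟩⟩
  · have := h.mem_of_adj huv
    simp only [Set.mem_compl_iff] at this
    tauto
  · have := h huv
    simp only [Set.mem_compl_iff]
    tauto

theorem IsBipartiteWith.isBipartiteWith_compl {s t : Set V} (h : H.IsBipartiteWith s t) :
    H.IsBipartiteWith s sᶜ :=
  isBipartiteWith_compl_iff.2 fun u v huv => by
    have := h.mem_of_adj huv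
    have : u ∈ s → u ∉ t := fun hu => Set.disjoint_left.1 h.disjoint hu
    have : v ∈ s → v ∉ t := fun hv => Set.disjoint_left.1 h.disjoint hv
    tauto

theorem Reachable.mem_iff_mem_iff {s t : Set V} (hs : H.IsBipartiteWith s sᶜ)
    (ht : H.IsBipartiteWith t tᶜ) {u v : V} (h : H.Reachable u v) :
    (u ∈ s ↔ u ∈ t) ↔ (v ∈ s ↔ v ∈ t) := by
  obtain ⟨p⟩ := h
  induction p with
  | nil => rfl
  | cons huw _ ih =>
    have := isBipartiteWith_compl_iff.1 hs huw
    have := isBipartiteWith_compl_iff.1 ht huw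
    rw [← ih]
    tauto

theorem forall_mem_supp_connectedComponentMk_iff {s t : Set V} (hs : H.IsBipartiteWith s sᶜ)
    (ht : H.IsBipartiteWith t tᶜ) (v : V) :
    (∀ w ∈ (H.connectedComponentMk v).supp, (w ∈ s ↔ w ∈ t)) ↔ (v ∈ s ↔ v ∈ t) :=
  ⟨fun h => h v rfl, fun h _ hw => ((ConnectedComponent.exact hw).mem_iff_mem_iff hs ht).2 h⟩

theorem exists_adj_mem_supp_connectedComponentMk_iff {v : V} :
    (∃ u w, H.Adj u w ∧ u ∈ (H.connectedComponentMk v).supp) ↔ v ∈ H.support := by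
  refine ⟨fun ⟨u, w, huw, hu⟩ => ?_, fun ⟨w, hvw⟩ => ⟨v, w, hvw, rfl⟩⟩
  by_cases hvu : v = u
  · exact hvu ▸ ⟨w, huw⟩
  · exact mem_support_of_reachable hvu (ConnectedComponent.exact hu).symm

theorem IsBipartiteWith.recolor {s : Set V} (hs : H.IsBipartiteWith s sᶜ)
    (S : Finset H.ConnectedComponent) :
    H.IsBipartiteWith {v | v ∈ H.support → (v ∈ s ↔ H.connectedComponentMk v ∈ S)}
      {v | v ∈ H.support → (v ∈ s ↔ H.connectedComponentMk v ∈ S)}ᶜ := by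
  refine isBipartiteWith_compl_iff.2 fun u v huv => ?_
  have := isBipartiteWith_compl_iff.1 hs huv
  have : u ∈ H.support := ⟨v, huv⟩
  have : v ∈ H.support := ⟨u, huv.symm⟩
  simp only [Set.mem_ofPred_eq, ConnectedComponent.connectedComponentMk_eq_of_adj huv]
  tauto

open scoped Classical in
theorem card_isBipartiteWith_compl [Fintype V] (hH : H.Colorable 2) :
    #{A : Finset V | H.IsBipartiteWith ↑A (↑A)ᶜ ∧ H.supportᶜ ⊆ ↑A}
      = 2 ^ Nat.card {c : H.ConnectedComponent // ∃ u v, H.Adj u v ∧ u ∈ c.supp} := by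
  obtain ⟨s, t, hst⟩ := IsBipartite.exists_isBipartiteWith hH
  have hs := hst.isBipartiteWith_compl
  rw [Nat.card_eq_fintype_card, Fintype.card_subtype, ← card_powerset]
  -- `A` corresponds to the set of components with an edge on which it agrees with `s`.
  refine card_nbij'
    (fun A => ({c | (∃ u v, H.Adj u v ∧ u ∈ c.supp) ∧
      ∀ w ∈ c.supp, (w ∈ (↑A : Set V) ↔ w ∈ s)} : Finset H.ConnectedComponent))
    (fun S => ({v | v ∈ H.support → (v ∈ s ↔ H.connectedComponentMk v ∈ S)} : Finset V))
    (fun A _ => ?_) (fun S _ => ?_) (fun A hA => ?_) (fun S hS => ?_)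
  · rw [mem_coe, mem_powerset]
    intro c hc
    rw [mem_filter] at hc ⊢
    exact ⟨hc.1, hc.2.1⟩
  · rw [mem_coe, mem_filter, coe_filter_univ]
    exact ⟨mem_univ _, hs.recolor S, fun v hv => (absurd · hv)⟩
  · rw [mem_coe, mem_filter] at hA
    ext v
    by_cases hv : v ∈ H.support
    · rw [mem_filter, mem_filter, forall_mem_supp_connectedComponentMk_iff hA.2.1 hs,
        exists_adj_mem_supp_connectedComponentMk_iff]
      simp only [mem_univ, true_and, hv, mem_coe]
      tauto
    · simp only [mem_filter, mem_univ, true_and, hv, false_imp_iff]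
      exact iff_of_true trivial (hA.2.2 hv)
  · rw [mem_coe, mem_powerset] at hS
    ext c
    induction c using ConnectedComponent.ind with | h v => ?_
    rw [mem_filter, coe_filter_univ,
      forall_mem_supp_connectedComponentMk_iff (hs.recolor S) hs]
    have hv : H.connectedComponentMk v ∈ S → v ∈ H.support := fun h =>
      exists_adj_mem_supp_connectedComponentMk_iff.1 (mem_filter.1 (hS h)).2
    simp only [mem_univ, true_and, exists_adj_mem_supp_connectedComponentMk_iff,
      Set.mem_ofPred_eq]
    tauto

open scoped Classical in
theorem isBipartiteWith_iff_mem_Icc [Fintype V] {A B : Finset V} :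
    H.IsBipartiteWith ↑A ↑B ↔
      H.IsBipartiteWith ↑A (↑A)ᶜ ∧
        B ∈ Icc (({v | v ∈ H.support} : Finset V) \ A) Aᶜ := by
  rw [isBipartiteWith_compl_iff, mem_Icc]
  constructor
  · intro h
    have hdisj : B ⊆ Aᶜ := fun v hv => mem_compl.2 fun hA =>
      Set.disjoint_left.1 h.disjoint (mem_coe.2 hA) (mem_coe.2 hv)
    refine ⟨fun u v huv => ?_, fun v hv => ?_, hdisj⟩
    · have := h.mem_of_adj huv
      have := @hdisj u
      have := @hdisj v
      simp only [mem_coe, mem_compl] at *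
      tauto
    · obtain ⟨hv, hvA⟩ := mem_sdiff.1 hv
      obtain ⟨w, hvw⟩ := (mem_filter.1 hv).2
      exact ((h.mem_of_adj hvw).resolve_left fun h => hvA h.1).1
  · rintro ⟨hside, hsupp, hB⟩
    refine ⟨Set.disjoint_left.2 fun v hA hB' => mem_compl.1 (hB hB') hA, fun u v huv => ?_⟩
    have hu : u ∈ ({v | v ∈ H.support} : Finset V) := mem_filter.2 ⟨mem_univ _, v, huv⟩
    have hv : v ∈ ({v | v ∈ H.support} : Finset V) := mem_filter.2 ⟨mem_univ _, u, huv.symm⟩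
    have := @hsupp u
    have := @hsupp v
    have := hside huv
    simp only [mem_coe, mem_sdiff] at *
    tauto

end

open scoped Classical in
theorem sum_isBipartiteWith_neg_one_pow [Fintype V] (H : SimpleGraph V) :
    ∑ p : Finset V × Finset V with H.IsBipartiteWith ↑p.1 ↑p.2, (-1 : ℤ) ^ (#p.1 + #p.2)
      = (-1) ^ Fintype.card V *
          #{A : Finset V | H.IsBipartiteWith ↑A (↑A)ᶜ ∧ H.supportᶜ ⊆ ↑A} := by
  have sum_partners (A : Finset V) :
      ∑ B ∈ ({B | H.IsBipartiteWith ↑A ↑B} : Finset (Finset V)), (-1 : ℤ) ^ #B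
        = if H.IsBipartiteWith ↑A (↑A)ᶜ ∧ H.supportᶜ ⊆ ↑A then (-1) ^ #Aᶜ
          else 0 := by
    rw [filter_congr fun B _ => isBipartiteWith_iff_mem_Icc]
    by_cases hA : H.IsBipartiteWith ↑A (↑A)ᶜ
    · have hcover : ({v | v ∈ H.support} : Finset V) \ A = Aᶜ ↔ H.supportᶜ ⊆ ↑A := by
        simp only [Finset.ext_iff, Set.subset_def, mem_sdiff, mem_filter, mem_univ, true_and,
          mem_compl, Set.mem_compl_iff, mem_coe]
        exact ⟨fun h v hv => by_contra fun hvA => hv ((h v).2 hvA).1,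
          fun h v => ⟨And.right, fun hvA => ⟨by_contra fun hv => hvA (h v hv), hvA⟩⟩⟩
      simp only [hA, true_and, filter_mem_eq_inter, univ_inter, sum_Icc_neg_one_pow_card, hcover]
      split_ifs with h
      · rw [hcover.2 h]
      · rfl
    · rw [if_neg fun h => hA h.1, filter_false_of_mem fun B _ h => hA h.1, sum_empty]
  rw [sum_filter, Fintype.sum_prod_type]
  calc ∑ A : Finset V, ∑ B : Finset V,
        (if H.IsBipartiteWith ↑A ↑B then (-1 : ℤ) ^ (#A + #B) else 0)
      = ∑ A : Finset V, (-1) ^ #A *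
          ∑ B ∈ ({B | H.IsBipartiteWith ↑A ↑B} : Finset (Finset V)), (-1 : ℤ) ^ #B := by
        simp_rw [pow_add, mul_sum, sum_filter]
    _ = ∑ A : Finset V, if H.IsBipartiteWith ↑A (↑A)ᶜ ∧ H.supportᶜ ⊆ ↑A then
          (-1) ^ Fintype.card V else 0 := by
        simp_rw [sum_partners, mul_ite, mul_zero, ← pow_add, card_add_card_compl]
    _ = _ := by rw [sum_ite, sum_const_zero, add_zero, sum_const, nsmul_eq_mul, mul_comm]

open scoped Classical in
theorem sum_dominates_neg_one_pow [Fintype V] [DecidableEq V] (G : SimpleGraph V) :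
    ∑ A : Finset V with dominates G A, (-1 : ℤ) ^ #A
      = ∑ p : Finset V × Finset V with Disjoint p.1 p.2 ∧ G.between ↑p.1 ↑p.2 = ⊥,
          (-1 : ℤ) ^ (#p.1 + #p.2) := by
  have sum_partners (A : Finset V) :
      ∑ B ∈ ({B | Disjoint A B ∧ G.between ↑A ↑B = ⊥} : Finset (Finset V)),
          (-1 : ℤ) ^ #B
        = if dominates G A then 1 else 0 := by
    set U : Finset V := {v | v ∉ A ∧ ∀ u ∈ A, ¬ G.Adj u v}
    have hU : ({B | Disjoint A B ∧ G.between ↑A ↑B = ⊥} : Finset (Finset V))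
        = U.powerset := by
      ext B
      simp only [mem_filter, mem_univ, true_and, mem_powerset, between_eq_bot_iff, mem_coe,
        subset_iff, U, disjoint_right]
      exact ⟨fun ⟨hd, hn⟩ v hv => ⟨hd hv, fun u hu => hn u hu v hv⟩,
        fun h => ⟨fun v hv => (h hv).1, fun u hu v hv => (h hv).2 u hu⟩⟩
    have hdom : U = ∅ ↔ dominates G A := by
      simp only [U, filter_eq_empty_iff, mem_univ, true_implies, not_and, not_forall,
        not_not, dominates]
      exact forall_congr' fun v => by tauto
    rw [hU, sum_powerset_neg_one_pow_card]
    exact if_congr hdom rfl rfl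
  rw [sum_filter, sum_filter, Fintype.sum_prod_type]
  refine sum_congr rfl fun A _ => ?_
  simp_rw [pow_add, ← mul_ite_zero]
  rw [← mul_sum, ← sum_filter, sum_partners, mul_ite, mul_one, mul_zero]

open scoped Classical in
theorem sum_edgeFinset_powerset_isBipartiteWith [Fintype V] [DecidableEq V]
    (G : SimpleGraph V) [DecidableRel G.Adj] (A B : Finset V) :
    ∑ F ∈ G.edgeFinset.powerset.filter
        (fun F : Finset (Sym2 V) => (fromEdgeSet (↑F : Set (Sym2 V))).IsBipartiteWith ↑A ↑B),
        (-1 : ℤ) ^ #F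
      = if Disjoint A B ∧ G.between ↑A ↑B = ⊥ then 1 else 0 := by
  by_cases hAB : Disjoint A B
  · have key (F : Finset (Sym2 V)) (hF : F ⊆ G.edgeFinset) :
        (fromEdgeSet (↑F : Set (Sym2 V))).IsBipartiteWith ↑A ↑B ↔
          F ⊆ (G.between ↑A ↑B).edgeFinset := by
      have hF' : (↑F : Set (Sym2 V)) ⊆ G.edgeSet := by rwa [← coe_edgeFinset, coe_subset]
      rw [isBipartiteWith_iff_le_between ((fromEdgeSet_le_iff_of_subset_edgeSet hF').2 hF')
        (disjoint_coe.2 hAB), fromEdgeSet_le_iff_of_subset_edgeSet hF', ← coe_edgeFinset,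
        coe_subset]
    have hfilter : G.edgeFinset.powerset.filter
        (fun F : Finset (Sym2 V) => (fromEdgeSet (↑F : Set (Sym2 V))).IsBipartiteWith ↑A ↑B)
          = (G.between ↑A ↑B).edgeFinset.powerset := by
      ext F
      simp only [mem_filter, mem_powerset]
      refine ⟨fun ⟨hF, h⟩ => (key F hF).1 h, fun h => ?_⟩
      have hF := h.trans (edgeFinset_subset_edgeFinset.2 between_le)
      exact ⟨hF, (key F hF).2 h⟩
    rw [hfilter, sum_powerset_neg_one_pow_card]
    exact if_congr (edgeFinset_eq_empty.trans (and_iff_right hAB).symm) rfl rfl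
  · rw [filter_false_of_mem fun F _ h => hAB (disjoint_coe.1 h.disjoint), sum_empty,
      if_neg fun h => hAB h.1]

open scoped Classical in
theorem sum_between_eq_bot_neg_one_pow [Fintype V] [DecidableEq V]
    (G : SimpleGraph V) [DecidableRel G.Adj] :
    ∑ p : Finset V × Finset V with Disjoint p.1 p.2 ∧ G.between ↑p.1 ↑p.2 = ⊥,
        (-1 : ℤ) ^ (#p.1 + #p.2)
      = ∑ F ∈ G.edgeFinset.powerset, (-1) ^ #F *
          ∑ p : Finset V × Finset V with
            (fromEdgeSet (↑F : Set (Sym2 V))).IsBipartiteWith ↑p.1 ↑p.2,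
            (-1 : ℤ) ^ (#p.1 + #p.2) := by
  calc ∑ p : Finset V × Finset V with Disjoint p.1 p.2 ∧ G.between ↑p.1 ↑p.2 = ⊥,
        (-1 : ℤ) ^ (#p.1 + #p.2)
      = ∑ p : Finset V × Finset V, (-1) ^ (#p.1 + #p.2) *
          ∑ F ∈ G.edgeFinset.powerset.filter (fun F : Finset (Sym2 V) =>
            (fromEdgeSet (↑F : Set (Sym2 V))).IsBipartiteWith ↑p.1 ↑p.2),
            (-1 : ℤ) ^ #F := by
        simp_rw [sum_edgeFinset_powerset_isBipartiteWith, mul_ite, mul_one, mul_zero, sum_filter]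
    _ = _ := by
        simp_rw [mul_sum, sum_filter, mul_comm ((-1 : ℤ) ^ (_ + _))]
        exact sum_comm

end SimpleGraph

open scoped Classical in
theorem eval_domPoly_neg_one [Fintype V] (G : SimpleGraph V) :
    (domPoly G).eval (-1) = ∑ A : Finset V with dominates G A, (-1 : ℤ) ^ #A := by
  simp [domPoly, eval_finsetSum]

open scoped Classical in
/-- `D(G,-1)` as an alternating sum over bipartite spanning subgraphs,
where `c(F)` is the number of components of `(V,F)` containing at least one edge. -/
theorem stmt_7 [Fintype V] [DecidableEq V] (G : SimpleGraph V) [DecidableRel G.Adj] :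
    (domPoly G).eval (-1)
      = (-1 : ℤ) ^ Fintype.card V *
        ∑ F ∈ G.edgeFinset.powerset.filter
            (fun F : Finset (Sym2 V) =>
              (SimpleGraph.fromEdgeSet (↑F : Set (Sym2 V))).Colorable 2),
          (-1 : ℤ) ^ F.card *
            2 ^ (Finset.univ.filter
              (fun c : (SimpleGraph.fromEdgeSet (↑F : Set (Sym2 V))).ConnectedComponent =>
                ∃ u v : V, (SimpleGraph.fromEdgeSet (↑F : Set (Sym2 V))).Adj u v ∧
                  u ∈ c.supp)).card := by
  rw [eval_domPoly_neg_one, G.sum_dominates_neg_one_pow, G.sum_between_eq_bot_neg_one_pow,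
    sum_filter, mul_sum]
  refine sum_congr rfl fun F _ => ?_
  rw [SimpleGraph.sum_isBipartiteWith_neg_one_pow]
  split_ifs with hcol
  · rw [SimpleGraph.card_isBipartiteWith_compl hcol, ← Fintype.card_subtype]
    simp only [Fintype.card_eq_nat_card]
    push_cast
    ring
  · rw [card_eq_zero.2 (filter_eq_empty_iff.2 fun A _ h => hcol h.1.isBipartite)]
    simp
end

section
/- For any graph G = (V,E), ∑_{W ⊆ V} (−1)^{|W|} D(G[W], x) = ∏_{i ∈ λ_G} (1 + (−x)^i), where λ_G is the multiset of orders (numbers of vertices) of the connected components of G. -/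
/-!
Writing `D(G[W])` as a sum over the `T ⊆ W` with `W ⊆ N[T]` and exchanging the sums, each `T`
contributes `x ^ |T|` times the alternating sum of `(-1) ^ |W|` over the interval `[T, N[T]]`,
which vanishes unless `N[T] = T`. The sets with `N[T] = T` are exactly the unions of connected
components, so the sum becomes `∑_S (-x) ^ (∑_{c ∈ S} |c|)` over sets `S` of components: the
expansion of `∏_c (1 + (-x) ^ |c|)`.
-/

open Finset Polynomial

variable {V : Type*}

namespace Finset

theorem sum_Icc_neg_one_pow_card_s9 {α R : Type*} [DecidableEq α] [Ring R] (s t : Finset α) :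
    ∑ u ∈ Icc s t, (-1 : R) ^ #u = if s = t then (-1) ^ #s else 0 := by
  by_cases hst : s ⊆ t
  · have hdisj : ∀ u ∈ (t \ s).powerset, Disjoint s u := fun u hu =>
      disjoint_of_subset_right (mem_powerset.1 hu) disjoint_sdiff
    have hsum : ∑ u ∈ (t \ s).powerset, (-1 : R) ^ #u = if t \ s = ∅ then 1 else 0 := by
      exact_mod_cast congrArg (Int.cast : ℤ → R) sum_powerset_neg_one_pow_card
    rw [Icc_eq_image_powerset hst, sum_image fun u hu v hv huv => ?_]
    · calc ∑ u ∈ (t \ s).powerset, (-1 : R) ^ #(s ∪ u)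
          = (-1) ^ #s * ∑ u ∈ (t \ s).powerset, (-1 : R) ^ #u := by
            rw [mul_sum]
            exact sum_congr rfl fun u hu => by rw [card_union_of_disjoint (hdisj u hu), pow_add]
        _ = if s = t then (-1) ^ #s else 0 := by
            have hts : t \ s = ∅ ↔ s = t := by
              rw [sdiff_eq_empty_iff_subset, subset_antisymm_iff, and_iff_right hst]
            simp only [hsum, hts, mul_ite, mul_one, mul_zero]
    · rw [← union_sdiff_cancel_left (hdisj u hu), huv, union_sdiff_cancel_left (hdisj v hv)]
  · rw [Icc_eq_empty fun h => hst h, sum_empty, if_neg fun h => hst h.le]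

end Finset

namespace SimpleGraph

section Components

variable [Fintype V] (G : SimpleGraph V) [DecidableEq G.ConnectedComponent]

def componentUnion (S : Finset G.ConnectedComponent) : Finset V :=
  {v | G.connectedComponentMk v ∈ S}

variable {G}

theorem image_componentUnion (S : Finset G.ConnectedComponent) :
    (G.componentUnion S).image G.connectedComponentMk = S := by
  ext c
  simp only [componentUnion, mem_image, mem_filter, mem_univ, true_and]
  refine ⟨fun ⟨v, hv, hvc⟩ => hvc ▸ hv, fun hc => ?_⟩
  obtain ⟨v, rfl⟩ := c.exists_rep
  exact ⟨v, hc, rfl⟩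

theorem card_componentUnion (S : Finset G.ConnectedComponent) :
    #(G.componentUnion S) = ∑ c ∈ S, Nat.card c.supp := by
  rw [card_eq_sum_card_fiberwise (f := G.connectedComponentMk) (t := S) fun v hv => by
    simpa [componentUnion] using hv]
  refine sum_congr rfl fun c hc => ?_
  have hsupp : c.supp = ↑({v | G.connectedComponentMk v = c} : Finset V) := by
    ext v
    simp [ConnectedComponent.mem_supp_iff]
  rw [hsupp, Nat.card_coe_set_eq, Set.ncard_coe_finset]
  congr 1
  ext v
  simp only [componentUnion, mem_filter, mem_univ, true_and]
  exact ⟨And.right, fun h => ⟨h ▸ hc, h⟩⟩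

end Components

variable [Fintype V] [DecidableEq V] (G : SimpleGraph V) [DecidableRel G.Adj]

def closedNbhd (T : Finset V) : Finset V :=
  T ∪ ({v | ∃ u ∈ T, G.Adj u v} : Finset V)

variable {G}

theorem mem_closedNbhd {T : Finset V} {v : V} :
    v ∈ G.closedNbhd T ↔ v ∈ T ∨ ∃ u ∈ T, G.Adj u v := by
  simp [closedNbhd]

theorem closedNbhd_eq_self_iff {T : Finset V} :
    G.closedNbhd T = T ↔ ∀ ⦃u v⦄, G.Adj u v → u ∈ T → v ∈ T := by
  simp only [closedNbhd, union_eq_left, subset_iff, mem_filter, mem_univ, true_and]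
  exact ⟨fun h u v huv hu => h ⟨u, hu, huv⟩, fun h v ⟨u, hu, huv⟩ => h huv hu⟩

theorem Reachable.mem_of_closedNbhd_eq_self {T : Finset V} (hT : G.closedNbhd T = T) {u v : V}
    (huv : G.Reachable u v) (hu : u ∈ T) : v ∈ T := by
  obtain ⟨p⟩ := huv
  induction p with
  | nil => exact hu
  | cons h _ ih => exact ih (closedNbhd_eq_self_iff.1 hT h hu)

theorem dominates_induce_iff (W : Finset V) (T : Finset (W : Set V)) :
    dominates (G.induce (W : Set V)) T ↔
      W ⊆ G.closedNbhd (T.map (Function.Embedding.subtype _)) := by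
  constructor
  · intro hT v hv
    rcases hT ⟨v, hv⟩ with h | ⟨u, hu, huv⟩
    · exact mem_closedNbhd.2 (Or.inl (mem_map_of_mem _ h))
    · exact mem_closedNbhd.2 (Or.inr ⟨u, mem_map_of_mem _ hu, huv⟩)
  · intro hW v
    rcases mem_closedNbhd.1 (hW v.2) with h | ⟨u, hu, huv⟩
    · exact Or.inl (by simpa using h)
    · obtain ⟨u', hu', rfl⟩ := mem_map.1 hu
      exact Or.inr ⟨u', hu', huv⟩

theorem domPoly_induce (W : Finset V) :
    domPoly (G.induce (W : Set V)) = ∑ T ∈ W.powerset with W ⊆ G.closedNbhd T, X ^ #T := by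
  rw [domPoly]
  refine sum_nbij (·.map (Function.Embedding.subtype _)) (fun T hT => ?_)
    (fun T _ T' _ h => Finset.map_injective _ h) (fun T hT => ?_) (fun T _ => by rw [card_map])
  · simp only [mem_filter, mem_powerset, dominates_induce_iff] at hT ⊢
    exact ⟨coe_subset.1 (map_subtype_subset T), hT.2⟩
  · simp only [coe_filter, mem_powerset] at hT
    have hmap : (T.subtype (· ∈ (W : Set V))).map (Function.Embedding.subtype _) = T :=
      subtype_map_of_mem fun v hv => hT.1 hv
    refine ⟨T.subtype (· ∈ (W : Set V)), ?_, hmap⟩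
    simp only [coe_filter, mem_powerset, dominates_induce_iff]
    refine ⟨subset_univ _, ?_⟩
    convert hT.2

theorem sum_neg_one_pow_mul_domPoly_induce :
    ∑ W ∈ (univ : Finset V).powerset, (-1 : ℤ[X]) ^ #W * domPoly (G.induce (W : Set V))
      = ∑ T ∈ (univ : Finset V).powerset with G.closedNbhd T = T, (-X) ^ #T := by
  calc ∑ W ∈ (univ : Finset V).powerset, (-1 : ℤ[X]) ^ #W * domPoly (G.induce (W : Set V))
      = ∑ W ∈ (univ : Finset V).powerset,
          ∑ T ∈ W.powerset with W ⊆ G.closedNbhd T, (-1 : ℤ[X]) ^ #W * X ^ #T := by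
        simp_rw [domPoly_induce, mul_sum]
    _ = ∑ T ∈ (univ : Finset V).powerset,
          ∑ W ∈ Icc T (G.closedNbhd T), (-1 : ℤ[X]) ^ #W * X ^ #T :=
        sum_comm' fun W T => by simp only [mem_powerset, mem_filter, mem_Icc, subset_univ]; tauto
    _ = ∑ T ∈ (univ : Finset V).powerset, if G.closedNbhd T = T then (-X) ^ #T else 0 := by
        simp_rw [← sum_mul, sum_Icc_neg_one_pow_card_s9, ite_mul, zero_mul, neg_pow (X : ℤ[X]),
          eq_comm]
    _ = _ := (sum_filter _ _).symm

variable [DecidableEq G.ConnectedComponent]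

theorem closedNbhd_componentUnion (S : Finset G.ConnectedComponent) :
    G.closedNbhd (G.componentUnion S) = G.componentUnion S := by
  refine closedNbhd_eq_self_iff.2 fun u v huv hu => ?_
  simpa [componentUnion, ← ConnectedComponent.connectedComponentMk_eq_of_adj huv] using hu

theorem componentUnion_image_of_closedNbhd_eq_self {T : Finset V} (hT : G.closedNbhd T = T) :
    G.componentUnion (T.image G.connectedComponentMk) = T := by
  ext v
  simp only [componentUnion, mem_image, mem_filter, mem_univ, true_and]
  exact ⟨fun ⟨u, hu, huv⟩ => (ConnectedComponent.exact huv).mem_of_closedNbhd_eq_self hT hu,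
    fun hv => ⟨v, hv, rfl⟩⟩

theorem sum_filter_closedNbhd_eq_self [Fintype G.ConnectedComponent] {M : Type*}
    [AddCommMonoid M] (f : ℕ → M) :
    ∑ T ∈ (univ : Finset V).powerset with G.closedNbhd T = T, f #T
      = ∑ S ∈ (univ : Finset G.ConnectedComponent).powerset,
          f (∑ c ∈ S, Nat.card c.supp) := by
  symm
  refine sum_nbij' G.componentUnion (·.image G.connectedComponentMk) (fun S _ => ?_)
    (fun T _ => by simp) (fun S _ => image_componentUnion S) (fun T hT => ?_)
    (fun S _ => by rw [card_componentUnion])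
  · simpa using closedNbhd_componentUnion S
  · exact componentUnion_image_of_closedNbhd_eq_self (mem_filter.1 hT).2

end SimpleGraph

theorem stmt_9_general [Fintype V] (G : SimpleGraph V) :
    ∑ W ∈ (Finset.univ : Finset V).powerset,
        (-1 : Polynomial ℤ) ^ W.card * domPoly (G.induce (↑W : Set V))
      = ((compOrders G).map (fun i => 1 + (-X : Polynomial ℤ) ^ i)).prod := by
  classical
  rw [SimpleGraph.sum_neg_one_pow_mul_domPoly_induce,
    SimpleGraph.sum_filter_closedNbhd_eq_self fun n => (-X : ℤ[X]) ^ n,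
    compOrders, Multiset.map_map, ← prod_eq_multiset_prod]
  simp_rw [Function.comp_apply, prod_one_add, prod_pow_eq_pow_sum]

/-- the alternating sum of domination polynomials of induced subgraphs
equals `∏_{i ∈ λ_G} (1 + (-x)^i)`, the product over the component orders of `G`. -/
theorem stmt_9 [Fintype V] [DecidableEq V] (G : SimpleGraph V) :
    ∑ W ∈ (Finset.univ : Finset V).powerset,
        (-1 : Polynomial ℤ) ^ W.card * domPoly (G.induce (↑W : Set V))
      = ((compOrders G).map (fun i => 1 + (-X : Polynomial ℤ) ^ i)).prod :=
  stmt_9_general G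
end

section
/- For any graph G = (V,E), the domination polynomial satisfies D(G,x) = ∑_{W ⊆ V} ∏_{i ∈ λ_{G[W]}} (x^i + (−1)^i), where λ_{G[W]} is the multiset of orders of the connected components of the induced subgraph G[W] (the empty product for W = ∅ equals 1). -/
open Finset Polynomial

variable {V : Type*}

/-! Expanding the product over the components of `G[W]` gives the sum of `x^|S| (-1)^|W \ S|`
over the unions `S` of components, i.e. over the `S ⊆ W` with no edge from `S` to `W \ S`.
For fixed `S` these `W` form the Boolean interval `[S, S ∪ U(S)]`, where `U(S)` is the set of
vertices not dominated by `S`. Exchanging the sums, the coefficient of `x^|S|` is the alternating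
sum over this interval, which is `1` if `U(S) = ∅`, i.e. if `S` dominates, and `0` otherwise. -/
namespace SimpleGraph

variable {α : Type*} {H : SimpleGraph α}

theorem Reachable.mem_of_forall_adj_mem {s : Set α} (hs : ∀ u ∈ s, ∀ v, H.Adj u v → v ∈ s)
    {u v : α} (huv : H.Reachable u v) (hu : u ∈ s) : v ∈ s := by
  have h := (reachable_iff_reflTransGen u v).1 huv
  clear huv
  induction h with
  | refl => exact hu
  | tail _ hadj ih => exact hs _ ih _ hadj

variable [Fintype α]

theorem card_filter_connectedComponentMk_mem [DecidableEq H.ConnectedComponent]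
    (t : Finset H.ConnectedComponent) :
    #{v | H.connectedComponentMk v ∈ t} = ∑ c ∈ t, Nat.card c.supp := by
  classical
  rw [card_eq_sum_card_fiberwise (f := H.connectedComponentMk) (t := t)
    (fun v hv => by simpa using hv)]
  refine sum_congr rfl fun c hc => ?_
  rw [Nat.card_eq_fintype_card, Fintype.card_subtype]
  congr 1
  ext v
  simp only [mem_filter, mem_univ, true_and, ConnectedComponent.mem_supp_iff]
  exact ⟨And.right, fun h => ⟨h ▸ hc, h⟩⟩

theorem sum_card_supp [Fintype H.ConnectedComponent] :
    ∑ c : H.ConnectedComponent, Nat.card c.supp = Fintype.card α := by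
  classical
  rw [← card_filter_connectedComponentMk_mem, filter_true_of_mem (fun _ _ => mem_univ _), card_univ]

theorem prod_pow_add_pow_card_supp [Fintype H.ConnectedComponent] [DecidableEq α]
    [DecidableRel H.Adj] {R : Type*} [CommSemiring R] (a b : R) :
    ∏ c : H.ConnectedComponent, (a ^ Nat.card c.supp + b ^ Nat.card c.supp) =
      ∑ A : Finset α with ∀ u ∈ A, ∀ v, H.Adj u v → v ∈ A,
        a ^ #A * b ^ (Fintype.card α - #A) := by
  classical
  rw [prod_add, powerset_univ]
  refine sum_nbij' (fun t => ({v | H.connectedComponentMk v ∈ t} : Finset α))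
    (fun A => A.image H.connectedComponentMk) ?_ (fun _ _ => mem_univ _) ?_ ?_ ?_
  · intro t _
    simp only [mem_filter, mem_univ, true_and]
    intro u hu v hadj
    rwa [← ConnectedComponent.connectedComponentMk_eq_of_adj hadj]
  · intro t _
    ext c
    simp only [mem_image, mem_filter, mem_univ, true_and]
    refine ⟨fun ⟨u, hu, huv⟩ => huv ▸ hu, fun hc => ?_⟩
    obtain ⟨v, rfl⟩ := c.exists_rep
    exact ⟨v, hc, rfl⟩
  · intro A hA
    have hclosed := (mem_filter.1 hA).2
    ext v
    simp only [mem_filter, mem_univ, true_and, mem_image]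
    refine ⟨fun ⟨u, hu, huv⟩ => ?_, fun hv => ⟨v, hv, rfl⟩⟩
    exact (ConnectedComponent.exact huv).mem_of_forall_adj_mem (s := (A : Set α))
      (by simpa using hclosed) hu
  · intro t _
    have hcompl :
        ∑ c ∈ univ \ t, Nat.card c.supp = Fintype.card α - ∑ c ∈ t, Nat.card c.supp := by
      rw [← sum_card_supp (H := H), ← sum_sdiff (subset_univ t), Nat.add_sub_cancel]
    rw [prod_pow_eq_pow_sum, prod_pow_eq_pow_sum, hcompl, card_filter_connectedComponentMk_mem]

end SimpleGraph

theorem prod_map_compOrders {α R : Type*} [Fintype α] [CommMonoid R] (H : SimpleGraph α)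
    [Fintype H.ConnectedComponent] (f : ℕ → R) :
    ((compOrders H).map f).prod = ∏ c : H.ConnectedComponent, f (Nat.card c.supp) := by
  rw [compOrders, Multiset.map_map, prod_eq_multiset_prod]
  congr!

theorem prod_compOrders_induce [Fintype V] [DecidableEq V] {R : Type*} [CommSemiring R]
    (a b : R) (G : SimpleGraph V) [DecidableRel G.Adj] (W : Finset V) :
    ((compOrders (G.induce (W : Set V))).map fun i => a ^ i + b ^ i).prod =
      ∑ S ∈ W.powerset with ∀ u ∈ S, ∀ v ∈ W, G.Adj u v → v ∈ S, a ^ #S * b ^ (#W - #S) := by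
  rw [prod_map_compOrders, SimpleGraph.prod_pow_add_pow_card_supp]
  refine sum_nbij' (fun A => A.map (Function.Embedding.subtype _)) (fun S => S.subtype (· ∈ W))
    ?_ ?_ ?_ ?_ ?_
  · intro A hA
    simp only [mem_filter, mem_univ, true_and] at hA
    simp only [mem_filter, mem_powerset, mem_map, Function.Embedding.subtype_apply]
    refine ⟨fun v hv => ?_, ?_⟩
    · obtain ⟨v, -, rfl⟩ := mem_map.1 hv
      exact v.2
    · rintro _ ⟨u, hu, rfl⟩ v hvW hadj
      exact ⟨⟨v, hvW⟩, hA u hu _ hadj, rfl⟩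
  · intro S hS
    simp only [mem_filter, mem_powerset] at hS
    simp only [mem_filter, mem_univ, true_and, mem_subtype]
    exact fun u hu v hadj => hS.2 u hu v v.2 hadj
  · intro A _
    ext v
    simp
  · intro S hS
    exact subtype_map_of_mem fun v hv => mem_powerset.1 (mem_filter.1 hS).1 hv
  · intro A _
    simp

theorem Finset.sum_Icc_neg_one_pow_card_sub {α R : Type*} [DecidableEq α] [Ring R]
    {s t : Finset α} (h : s ⊆ t) :
    ∑ u ∈ Icc s t, (-1 : R) ^ (#u - #s) = if s = t then 1 else 0 := by
  have hdisj : ∀ u ∈ (t \ s).powerset, Disjoint s u := fun u hu =>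
    disjoint_of_subset_right (mem_powerset.1 hu) disjoint_sdiff
  rw [Icc_eq_image_powerset h, sum_image fun u hu v hv huv => by
    rw [← union_sdiff_cancel_left (hdisj u hu), huv, union_sdiff_cancel_left (hdisj v hv)]]
  have hsum : ∑ u ∈ (t \ s).powerset, (-1 : R) ^ (#(s ∪ u) - #s) =
      ((∑ u ∈ (t \ s).powerset, (-1 : ℤ) ^ #u : ℤ) : R) := by
    push_cast
    refine sum_congr rfl fun u hu => ?_
    rw [card_union_of_disjoint (hdisj u hu), Nat.add_sub_cancel_left]
  have hempty : t \ s = ∅ ↔ s = t :=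
    sdiff_eq_empty_iff_subset.trans ⟨subset_antisymm h, fun hst => hst ▸ subset_rfl⟩
  rw [hsum, sum_powerset_neg_one_pow_card, if_congr hempty rfl rfl]
  split_ifs <;> simp

open scoped Classical in
noncomputable def undominated [Fintype V] (G : SimpleGraph V) (S : Finset V) : Finset V :=
  {v | v ∉ S ∧ ∀ u ∈ S, ¬ G.Adj u v}

section Domination

variable [Fintype V] {G : SimpleGraph V} {S W : Finset V}

theorem mem_undominated {v : V} : v ∈ undominated G S ↔ v ∉ S ∧ ∀ u ∈ S, ¬ G.Adj u v := by
  simp [undominated]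

theorem dominates_iff_undominated_eq_empty : dominates G S ↔ undominated G S = ∅ := by
  simp only [dominates, eq_empty_iff_forall_notMem, mem_undominated, not_and, not_forall,
    not_not, exists_prop]
  exact forall_congr' fun v => or_iff_not_imp_left

theorem mem_Icc_union_undominated [DecidableEq V] :
    W ∈ Icc S (S ∪ undominated G S) ↔ S ⊆ W ∧ ∀ u ∈ S, ∀ v ∈ W, G.Adj u v → v ∈ S := by
  rw [mem_Icc]
  refine and_congr_right fun _ => ⟨fun hW u hu v hv hadj => ?_, fun hclosed v hv => ?_⟩
  · rcases mem_union.1 (hW hv) with hvS | hvU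
    · exact hvS
    · exact absurd hadj ((mem_undominated.1 hvU).2 u hu)
  · by_cases hvS : v ∈ S
    · exact mem_union_left _ hvS
    · refine mem_union_right _ (mem_undominated.2 ⟨hvS, fun u hu hadj => ?_⟩)
      exact hvS (hclosed u hu v hv hadj)

theorem domPoly_eq_sum_Icc_union_undominated [DecidableEq V] (G : SimpleGraph V) :
    domPoly G = ∑ S : Finset V,
      X ^ #S * ∑ W ∈ Icc S (S ∪ undominated G S), (-1 : ℤ[X]) ^ (#W - #S) := by
  rw [domPoly, sum_filter, powerset_univ]
  refine sum_congr rfl fun S _ => ?_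
  have hdom : S = S ∪ undominated G S ↔ dominates G S := by
    rw [dominates_iff_undominated_eq_empty, eq_empty_iff_forall_notMem, left_eq_union]
    exact ⟨fun h v hv => (mem_undominated.1 hv).1 (h hv), fun h v hv => absurd hv (h v)⟩
  rw [sum_Icc_neg_one_pow_card_sub subset_union_left]
  by_cases hS : dominates G S <;> simp [hS, hdom]

end Domination

theorem stmt_10_general [Fintype V] (G : SimpleGraph V) :
    domPoly G
      = ∑ W ∈ (Finset.univ : Finset V).powerset,
          ((compOrders (G.induce (↑W : Set V))).map
            (fun i => (X : Polynomial ℤ) ^ i + (-1) ^ i)).prod := by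
  classical
  rw [domPoly_eq_sum_Icc_union_undominated]
  simp_rw [mul_sum, powerset_univ, prod_compOrders_induce]
  exact sum_comm' fun S W => by
    rw [mem_Icc_union_undominated]
    simp [and_comm]

/-- `D(G,x) = ∑_{W ⊆ V} ∏_{i ∈ λ_{G[W]}} (x^i + (-1)^i)`. -/
theorem stmt_10 [Fintype V] [DecidableEq V] (G : SimpleGraph V) :
    domPoly G
      = ∑ W ∈ (Finset.univ : Finset V).powerset,
          ((compOrders (G.induce (↑W : Set V))).map
            (fun i => (X : Polynomial ℤ) ^ i + (-1) ^ i)).prod :=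
  stmt_10_general G
end

section
/- Let G be a finite graph. Call an induced subgraph H of G conformal if every connected component of H has an even number of vertices (the empty subgraph is conformal). Then the number of dominating sets of G equals ∑_{H ∈ Con(G)} 2^{k(H)}, where Con(G) is the set of vertex-induced conformal subgraphs of G and k(H) is the number of connected components of H. -/
/-!
Inclusion–exclusion over the undominated vertices gives `[W dominates] = ∑ (-1)^|T|`,
summed over `T ⊆ V ∖ N[W]`. Regrouping the pairs `(W, T)` by `S = W ∪ T`, the condition on `T`
says that `T` is a union of connected components of `G[S]`, so the inner sum factors as
`∏_c (1 + (-1)^|c|)` over those components: it is `2^k(G[S])` when every component has even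
order and `0` otherwise.
-/

open Finset Polynomial

variable {V : Type*}

namespace Finset

variable {ι α β R : Type*}

theorem prod_one_add_neg_one_pow (s : Finset ι) (n : ι → ℕ) :
    ∏ i ∈ s, (1 + (-1 : ℤ) ^ n i) = if ∀ i ∈ s, Even (n i) then 2 ^ #s else 0 := by
  split_ifs with h
  · rw [prod_congr rfl fun i hi => by rw [(h i hi).neg_one_pow], prod_const]
    norm_num
  · push Not at h
    obtain ⟨i, hi, hodd⟩ := h
    exact prod_eq_zero hi (by rw [(Nat.not_even_iff_odd.mp hodd).neg_one_pow]; norm_num)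

theorem sum_prod_preimage_eq_prod_one_add [Fintype α] [Fintype β] [DecidableEq β]
    [CommSemiring R] (f : α → β) (g : α → R) :
    ∑ B : Finset β, ∏ a ∈ univ.filter (f · ∈ B), g a
      = ∏ b, (1 + ∏ a ∈ univ.filter (f · = b), g a) := by
  rw [prod_one_add, powerset_univ]
  refine sum_congr rfl fun B _ => ?_
  rw [← prod_fiberwise_of_maps_to (t := B) (fun a ha => (mem_filter.1 ha).2)]
  refine prod_congr rfl fun b hb => prod_congr ?_ fun _ _ => rfl
  ext a
  simp only [mem_filter, mem_univ, true_and, and_iff_right_iff_imp]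
  exact fun h => h ▸ hb

theorem powerset_filter (s : Finset α) (p : α → Prop) [DecidablePred p] :
    (s.filter p).powerset = s.powerset.filter (fun t => ∀ x ∈ t, p x) := by
  ext t
  simp only [mem_powerset, mem_filter, subset_iff]
  grind

theorem sum_sum_powerset_compl [Fintype α] [DecidableEq α] [AddCommMonoid R]
    (f : Finset α → Finset α → R) :
    ∑ W, ∑ T ∈ Wᶜ.powerset, f W T = ∑ S, ∑ T ∈ S.powerset, f (S \ T) T := by
  rw [sum_sigma', sum_sigma']
  refine sum_nbij' (fun p => ⟨p.1 ∪ p.2, p.2⟩) (fun p => ⟨p.1 \ p.2, p.2⟩) ?_ ?_ ?_ ?_ ?_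
  all_goals
    intro p hp
    simp only [mem_sigma, mem_univ, mem_powerset, true_and,
      subset_compl_iff_disjoint_left] at hp ⊢
  · exact subset_union_right
  · exact disjoint_sdiff_self_left
  · rw [union_sdiff_cancel_right hp]
  · rw [sdiff_union_of_subset hp]
  · rw [union_sdiff_cancel_right hp]

end Finset

namespace SimpleGraph

variable {α : Type*}

def IsAdjClosed (H : SimpleGraph α) (T : Finset α) : Prop :=
  ∀ ⦃a b⦄, H.Adj a b → a ∈ T → b ∈ T

theorem IsAdjClosed.mem_of_reachable {H : SimpleGraph α} {T : Finset α} (hT : H.IsAdjClosed T)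
    {a b : α} (hab : H.Reachable a b) (ha : a ∈ T) : b ∈ T := by
  obtain ⟨w⟩ := hab
  induction w with
  | nil => exact ha
  | cons h _ ih => exact ih (hT h ha)

variable [Fintype α] (H : SimpleGraph α)

theorem card_filter_connectedComponentMk_eq [DecidableEq H.ConnectedComponent]
    (c : H.ConnectedComponent) :
    #(univ.filter (H.connectedComponentMk · = c)) = Nat.card c.supp := by
  classical
  rw [Nat.card_eq_card_toFinset]
  congr 1
  ext a
  simp [ConnectedComponent.mem_supp_iff]

theorem sum_neg_one_pow_card_isAdjClosed [DecidablePred H.IsAdjClosed]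
    [Fintype H.ConnectedComponent] [DecidableEq H.ConnectedComponent] :
    ∑ T ∈ univ.filter H.IsAdjClosed, (-1 : ℤ) ^ #T
      = ∏ c : H.ConnectedComponent, (1 + (-1 : ℤ) ^ Nat.card c.supp) := by
  have hpreimage : ∑ B : Finset H.ConnectedComponent,
      ∏ _a ∈ univ.filter (H.connectedComponentMk · ∈ B), (-1 : ℤ)
        = ∑ T ∈ univ.filter H.IsAdjClosed, (-1 : ℤ) ^ #T := by
    refine sum_nbij' (fun B => univ.filter (H.connectedComponentMk · ∈ B))
      (fun T => T.image H.connectedComponentMk) ?_ (fun _ _ => mem_univ _) ?_ ?_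
      (fun _ _ => prod_const _)
    · intro B _
      simp only [mem_filter, mem_univ, true_and]
      intro a b hab ha
      simpa only [mem_filter, mem_univ, true_and, ConnectedComponent.sound hab.reachable] using ha
    · intro B _
      ext c
      induction c using ConnectedComponent.ind with | h a => ?_
      simp only [mem_image, mem_filter, mem_univ, true_and]
      exact ⟨fun ⟨b, hb, hba⟩ => hba ▸ hb, fun ha => ⟨a, ha, rfl⟩⟩
    · intro T hT
      ext a
      simp only [mem_filter, mem_image, mem_univ, true_and, ConnectedComponent.eq]
      exact ⟨fun ⟨b, hb, hba⟩ => (mem_filter.1 hT).2.mem_of_reachable hba hb,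
        fun ha => ⟨a, ha, Reachable.refl _⟩⟩
  rw [← hpreimage, sum_prod_preimage_eq_prod_one_add]
  simp only [prod_const, card_filter_connectedComponentMk_eq]

section Induce

variable [DecidableEq V] (G : SimpleGraph V) [DecidableRel G.Adj]

open scoped Classical in
theorem sum_filter_powerset_eq_sum_isAdjClosed_induce {R : Type*} [AddCommMonoid R]
    (S : Finset V) (f : ℕ → R) :
    ∑ T ∈ S.powerset.filter (fun T => ∀ t ∈ T, ∀ w ∈ S \ T, ¬ G.Adj w t), f #T
      = ∑ T ∈ univ.filter (G.induce (S : Set V)).IsAdjClosed, f #T := by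
  refine sum_nbij' (fun T => T.subtype (· ∈ (S : Set V)))
    (fun T => T.map (Function.Embedding.subtype _)) ?_ ?_ ?_ ?_ ?_
  · intro T hT
    simp only [mem_filter, mem_powerset] at hT
    simp only [mem_filter, mem_univ, true_and]
    intro a b hab ha
    rw [mem_subtype] at ha ⊢
    by_contra hb
    exact hT.2 a ha b (mem_sdiff.2 ⟨b.2, hb⟩) hab.symm
  · intro T hT
    simp only [mem_filter, mem_univ, true_and] at hT
    simp only [mem_filter, mem_powerset, mem_sdiff, mem_map, Function.Embedding.coe_subtype]
    refine ⟨fun x hx => ?_, ?_⟩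
    · obtain ⟨a, -, rfl⟩ := mem_map.1 hx
      exact a.2
    · rintro _ ⟨a, ha, rfl⟩ w ⟨hw, hwT⟩ hwa
      exact hwT ⟨⟨w, hw⟩, hT hwa.symm ha, rfl⟩
  · intro T hT
    exact subtype_map_of_mem (mem_powerset.1 (mem_filter.1 hT).1)
  · intro T _
    ext a
    simp
  · intro T hT
    have hTS : T ⊆ S := mem_powerset.1 (mem_filter.1 hT).1
    rw [card_subtype, filter_true_of_mem fun x hx => mem_coe.2 (hTS hx)]

theorem sum_neg_one_pow_card_filter_powerset_eq_ite [Fintype V] (S : Finset V) :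
    ∑ T ∈ S.powerset.filter (fun T => ∀ t ∈ T, ∀ w ∈ S \ T, ¬ G.Adj w t),
        (-1 : ℤ) ^ #T
      = if ∀ i ∈ compOrders (G.induce (S : Set V)), Even i
        then 2 ^ Nat.card (G.induce (S : Set V)).ConnectedComponent else 0 := by
  classical
  calc _ = ∑ T ∈ univ.filter (G.induce (S : Set V)).IsAdjClosed, (-1 : ℤ) ^ #T := by
        -- the two sides may differ in the `Decidable` instances of their filters
        convert G.sum_filter_powerset_eq_sum_isAdjClosed_induce S (fun n => (-1 : ℤ) ^ n)
    _ = _ := by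
        rw [sum_neg_one_pow_card_isAdjClosed, prod_one_add_neg_one_pow, card_univ,
          ← Nat.card_eq_fintype_card]
        simp [compOrders]

theorem dominates_iff_filter_compl_eq_empty [Fintype V] (W : Finset V) :
    dominates G W ↔ Wᶜ.filter (fun v => ∀ w ∈ W, ¬ G.Adj w v) = ∅ := by
  simp only [dominates, filter_eq_empty_iff, mem_compl, not_forall, not_not]
  grind

theorem card_filter_dominates_eq_sum [Fintype V] [DecidablePred (dominates G)] :
    (#(univ.filter (dominates G)) : ℤ)
      = ∑ W : Finset V, ∑ T ∈ Wᶜ.powerset,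
          if ∀ t ∈ T, ∀ w ∈ W, ¬ G.Adj w t then (-1) ^ #T else 0 := by
  rw [natCast_card_filter]
  refine sum_congr rfl fun W _ => ?_
  calc (if dominates G W then 1 else 0)
      = ∑ T ∈ (Wᶜ.filter fun v => ∀ w ∈ W, ¬ G.Adj w v).powerset, (-1 : ℤ) ^ #T := by
        rw [sum_powerset_neg_one_pow_card]
        exact if_congr (G.dominates_iff_filter_compl_eq_empty W) rfl rfl
    _ = _ := by
        rw [powerset_filter]
        convert sum_filter _ _

end Induce

end SimpleGraph

open scoped Classical in
theorem stmt_11_general [Fintype V] (G : SimpleGraph V) :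
    (Finset.univ.powerset.filter (fun W => dominates G W)).card
      = ∑ W ∈ (Finset.univ : Finset V).powerset.filter
          (fun W : Finset V => ∀ i ∈ compOrders (G.induce (↑W : Set V)), Even i),
          2 ^ Nat.card (G.induce (↑W : Set V)).ConnectedComponent := by
  have hℤ : (#(univ.filter (dominates G)) : ℤ)
      = ∑ S : Finset V, if ∀ i ∈ compOrders (G.induce (S : Set V)), Even i
        then 2 ^ Nat.card (G.induce (S : Set V)).ConnectedComponent else 0 := by
    rw [G.card_filter_dominates_eq_sum, sum_sum_powerset_compl]
    refine sum_congr rfl fun S _ => ?_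
    rw [← sum_filter]
    convert G.sum_neg_one_pow_card_filter_powerset_eq_ite S
  rw [← sum_filter] at hℤ
  rw [powerset_univ]
  exact_mod_cast hℤ

open scoped Classical in
/-- `d(G) = ∑_{H ∈ Con(G)} 2^{k(H)}`, the sum over vertex-induced
conformal subgraphs (all components of even order), `k` = number of components. -/
theorem stmt_11 [Fintype V] [DecidableEq V] (G : SimpleGraph V) :
    (Finset.univ.powerset.filter (fun W => dominates G W)).card
      = ∑ W ∈ (Finset.univ : Finset V).powerset.filter
          (fun W : Finset V => ∀ i ∈ compOrders (G.induce (↑W : Set V)), Even i),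
          2 ^ Nat.card (G.induce (↑W : Set V)).ConnectedComponent :=
  stmt_11_general G
end

section
/- Let G = (V,E) be a graph with n vertices. For each 0 ≤ k ≤ n, the number of dominating sets of G of cardinality k equals ∑_{W ⊆ V, |N[W]| ≤ n−k} (−1)^{|W|} · C(n − |N[W]|, k), where C denotes the binomial coefficient. -/
open Finset Polynomial

variable {V : Type*}

/-!
`C(n - |N[W]|, k)` counts the `k`-sets `S` disjoint from `N[W]`, and `S` misses `N[W]` exactly
when `W` misses `N[S]`. Exchanging the two sums, the coefficient of a `k`-set `S` becomes
`∑_{W ⊆ V \ N[S]} (-1)^|W|`, which is `1` if `N[S] = V` and `0` otherwise.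
-/

namespace Finset

variable {α : Type*} [Fintype α] [DecidableEq α]

theorem card_filter_powersetCard_disjoint (k : ℕ) (T : Finset α) :
    #((univ.powersetCard k).filter (Disjoint · T)) = (Fintype.card α - #T).choose k := by
  rw [← card_compl, ← card_powersetCard]
  congr 1
  ext S
  simp [mem_powersetCard, subset_compl_iff_disjoint_right, and_comm]

theorem sum_filter_disjoint_neg_one_pow_card (T : Finset α) :
    ∑ W ∈ univ.powerset.filter (Disjoint · T), (-1 : ℤ) ^ #W = if T = univ then 1 else 0 := by
  have : univ.powerset.filter (Disjoint · T) = Tᶜ.powerset := by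
    ext W
    simp [subset_compl_iff_disjoint_right]
  simp only [this, sum_powerset_neg_one_pow_card, compl_eq_empty_iff]

end Finset

namespace SimpleGraph

variable [Fintype V] [DecidableEq V] (G : SimpleGraph V)

open scoped Classical in
noncomputable def closedNbhdFinset (W : Finset V) : Finset V :=
  univ.filter (fun x : V => x ∈ W ∨ ∃ u ∈ W, G.Adj u x)

theorem mem_closedNbhdFinset {W : Finset V} {x : V} :
    x ∈ G.closedNbhdFinset W ↔ x ∈ W ∨ ∃ u ∈ W, G.Adj u x := by
  simp [closedNbhdFinset]

theorem disjoint_closedNbhdFinset_comm {S W : Finset V} :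
    Disjoint S (G.closedNbhdFinset W) ↔ Disjoint W (G.closedNbhdFinset S) := by
  simp only [Finset.disjoint_left, mem_closedNbhdFinset, not_or, not_exists, not_and]
  constructor <;>
  · intro h a ha
    exact ⟨fun haS => (h haS).1 ha, fun b hb hab => (h hb).2 a ha hab.symm⟩

theorem dominates_iff_closedNbhdFinset_eq_univ {W : Finset V} :
    dominates G W ↔ G.closedNbhdFinset W = univ := by
  simp [dominates, eq_univ_iff_forall, mem_closedNbhdFinset]

open scoped Classical in
theorem card_dominating_eq_sum_powerset (k : ℕ) :
    (#((univ.powersetCard k).filter (dominates G)) : ℤ)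
      = ∑ W ∈ univ.powerset,
          (-1 : ℤ) ^ #W * ((Fintype.card V - #(G.closedNbhdFinset W)).choose k : ℤ) := by
  symm
  calc _ = ∑ W ∈ univ.powerset, ∑ S ∈ univ.powersetCard k,
          if Disjoint S (G.closedNbhdFinset W) then (-1 : ℤ) ^ #W else 0 := by
        refine sum_congr rfl fun W _ => ?_
        rw [← sum_filter, sum_const, card_filter_powersetCard_disjoint, nsmul_eq_mul, mul_comm]
    _ = ∑ S ∈ univ.powersetCard k, ∑ W ∈ univ.powerset,
          if Disjoint W (G.closedNbhdFinset S) then (-1 : ℤ) ^ #W else 0 := by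
        rw [sum_comm]
        simp_rw [disjoint_closedNbhdFinset_comm]
    _ = ∑ S ∈ univ.powersetCard k, if G.closedNbhdFinset S = univ then 1 else 0 := by
        refine sum_congr rfl fun S _ => ?_
        rw [← sum_filter, sum_filter_disjoint_neg_one_pow_card]
    _ = _ := by
        rw [sum_boole, Nat.cast_inj]
        congr 1
        exact filter_congr fun S _ => (dominates_iff_closedNbhdFinset_eq_univ G).symm

end SimpleGraph

open scoped Classical in
theorem stmt_15_general [Fintype V] [DecidableEq V] (G : SimpleGraph V)
    (n : ℕ) (hn : n = Fintype.card V) (k : ℕ) :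
    ((Finset.univ.powerset.filter
        (fun W : Finset V => dominates G W ∧ W.card = k)).card : ℤ)
      = ∑ W ∈ (Finset.univ : Finset V).powerset.filter
          (fun W : Finset V =>
            (Finset.univ.filter (fun x : V => x ∈ W ∨ ∃ u ∈ W, G.Adj u x)).card ≤ n - k),
          (-1 : ℤ) ^ W.card *
            ((n - (Finset.univ.filter
              (fun x : V => x ∈ W ∨ ∃ u ∈ W, G.Adj u x)).card).choose k : ℤ) := by
  subst hn
  have h_dom : univ.powerset.filter (fun W : Finset V => dominates G W ∧ #W = k)
      = (univ.powersetCard k).filter (dominates G) := by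
    ext W
    simp [mem_powersetCard, and_comm]
  change _ = ∑ W ∈ univ.powerset.filter (fun W => #(G.closedNbhdFinset W) ≤ _ - k),
    (-1 : ℤ) ^ #W * ((Fintype.card V - #(G.closedNbhdFinset W)).choose k : ℤ)
  rw [h_dom, G.card_dominating_eq_sum_powerset]
  refine (sum_subset (filter_subset _ _) fun W hW hW_small => ?_).symm
  have h_lt : Fintype.card V - #(G.closedNbhdFinset W) < k := by
    have h_le := card_le_univ (G.closedNbhdFinset W)
    have h_gt := not_and.mp (mem_filter.not.mp hW_small) hW
    omega
  simp [Nat.choose_eq_zero_of_lt h_lt]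

open scoped Classical in
/-- the number of dominating sets of cardinality `k` equals
`∑_{W ⊆ V, |N[W]| ≤ n-k} (-1)^|W| C(n - |N[W]|, k)`. -/
theorem stmt_15 [Fintype V] [DecidableEq V] (G : SimpleGraph V)
    (n : ℕ) (hn : n = Fintype.card V) (k : ℕ) (hk : k ≤ n) :
    ((Finset.univ.powerset.filter
        (fun W : Finset V => dominates G W ∧ W.card = k)).card : ℤ)
      = ∑ W ∈ (Finset.univ : Finset V).powerset.filter
          (fun W : Finset V =>
            (Finset.univ.filter (fun x : V => x ∈ W ∨ ∃ u ∈ W, G.Adj u x)).card ≤ n - k),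
          (-1 : ℤ) ^ W.card *
            ((n - (Finset.univ.filter
              (fun x : V => x ∈ W ∨ ∃ u ∈ W, G.Adj u x)).card).choose k : ℤ) :=
  stmt_15_general G n hn k
end

section
/- Let G = (V,E) be a graph with n vertices and domination number γ(G). Then γ(G) is the smallest nonnegative integer k such that ∑_{W ⊆ V} (−1)^{|W|} · C(n − |N[W]|, k) ≠ 0. -/
open Finset Polynomial

variable {V : Type*}

/-!
Count pairs `(W, S)` with `|S| = k` and `S ∩ N[W] = ∅`, weighted by `(-1)^|W|`. For fixed `W` there are
`C(n - |N[W]|, k)` such `S`. Since adjacency is symmetric, `S ∩ N[W] = ∅` iff `W ∩ N[S] = ∅`, so for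
fixed `S` the weights sum over the subsets of `V \ N[S]`, giving `1` if `S` dominates and `0` otherwise.
Hence the sum is the number `d_k(G)` of dominating `k`-sets, which is nonzero exactly when `k` is the size
of some dominating set.
-/

namespace SimpleGraph

variable [Fintype V] [DecidableEq V]

-- The closed neighbourhood `N[W]`, with the instances of `stmt_16`, so that it unfolds to the set there.
open scoped Classical in
noncomputable def closedNeighborFinset (G : SimpleGraph V) (W : Finset V) : Finset V :=
  univ.filter fun x => x ∈ W ∨ ∃ u ∈ W, G.Adj u x

@[simp]
theorem mem_closedNeighborFinset {G : SimpleGraph V} {W : Finset V} {x : V} :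
    x ∈ G.closedNeighborFinset W ↔ x ∈ W ∨ ∃ u ∈ W, G.Adj u x := by
  simp [closedNeighborFinset]

theorem disjoint_closedNeighborFinset_comm {G : SimpleGraph V} {S W : Finset V} :
    Disjoint S (G.closedNeighborFinset W) ↔ Disjoint W (G.closedNeighborFinset S) := by
  simp only [Finset.disjoint_left, mem_closedNeighborFinset, not_or, not_exists, not_and]
  exact ⟨fun h w hw => ⟨fun hwS => (h hwS).1 hw, fun s hs hsw => (h hs).2 w hw hsw.symm⟩,
    fun h s hs => ⟨fun hsW => (h hsW).1 hs, fun w hw hws => (h hw).2 s hs hws.symm⟩⟩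

theorem dominates_iff_closedNeighborFinset_eq_univ {G : SimpleGraph V} {S : Finset V} :
    dominates G S ↔ G.closedNeighborFinset S = univ := by
  simp [dominates, eq_univ_iff_forall, closedNeighborFinset]

open scoped Classical in
theorem sum_neg_one_pow_mul_choose_eq_card_dominating (G : SimpleGraph V) (k : ℕ) :
    ∑ W ∈ (univ : Finset V).powerset,
        (-1 : ℤ) ^ #W * ((Fintype.card V - #(G.closedNeighborFinset W)).choose k : ℤ) =
      #{S ∈ powersetCard k univ | dominates G S} := by
  calc ∑ W ∈ (univ : Finset V).powerset,
        (-1 : ℤ) ^ #W * ((Fintype.card V - #(G.closedNeighborFinset W)).choose k : ℤ)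
      = ∑ W ∈ (univ : Finset V).powerset,
          ∑ S ∈ powersetCard k (G.closedNeighborFinset W)ᶜ, (-1 : ℤ) ^ #W := by
        refine sum_congr rfl fun W _ => ?_
        rw [sum_const, card_powersetCard, card_compl, nsmul_eq_mul, mul_comm]
    _ = ∑ S ∈ powersetCard k (univ : Finset V),
          ∑ W ∈ (G.closedNeighborFinset S)ᶜ.powerset, (-1 : ℤ) ^ #W := by
        refine sum_comm' fun W S => ?_
        simp only [mem_powerset, mem_powersetCard, subset_univ, true_and,
          subset_compl_iff_disjoint_right, disjoint_closedNeighborFinset_comm (S := S)]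
    _ = ∑ S ∈ powersetCard k (univ : Finset V), if dominates G S then (1 : ℤ) else 0 := by
        refine sum_congr rfl fun S _ => ?_
        simp only [sum_powerset_neg_one_pow_card, compl_eq_empty_iff,
          dominates_iff_closedNeighborFinset_eq_univ]
    _ = #{S ∈ powersetCard k univ | dominates G S} := by
        rw [sum_boole]

open scoped Classical in
theorem sum_neg_one_pow_mul_choose_ne_zero_iff (G : SimpleGraph V) (k : ℕ) :
    ∑ W ∈ (univ : Finset V).powerset,
        (-1 : ℤ) ^ #W * ((Fintype.card V - #(G.closedNeighborFinset W)).choose k : ℤ) ≠ 0 ↔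
      ∃ W : Finset V, dominates G W ∧ #W = k := by
  rw [G.sum_neg_one_pow_mul_choose_eq_card_dominating, Nat.cast_ne_zero, ← pos_iff_ne_zero,
    card_pos, filter_nonempty_iff]
  simp only [mem_powersetCard, subset_univ, true_and]
  exact ⟨fun ⟨S, hk, hS⟩ => ⟨S, hS, hk⟩, fun ⟨S, hS, hk⟩ => ⟨S, hk, hS⟩⟩

end SimpleGraph

open scoped Classical in
/-- the domination number `γ(G)` is the least `k` such that
`∑_{W ⊆ V} (-1)^|W| C(n - |N[W]|, k) ≠ 0`. -/
theorem stmt_16 [Fintype V] [DecidableEq V] (G : SimpleGraph V) :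
    IsLeast
      {k : ℕ |
        (∑ W ∈ (Finset.univ : Finset V).powerset,
          (-1 : ℤ) ^ W.card *
            ((Fintype.card V - (Finset.univ.filter
              (fun x : V => x ∈ W ∨ ∃ u ∈ W, G.Adj u x)).card).choose k : ℤ)) ≠ 0}
      (sInf {k : ℕ | ∃ W : Finset V, dominates G W ∧ W.card = k}) := by
  have hne : {k : ℕ | ∃ W : Finset V, dominates G W ∧ W.card = k}.Nonempty :=
    ⟨_, univ, fun v => Or.inl (mem_univ v), rfl⟩
  exact ⟨(G.sum_neg_one_pow_mul_choose_ne_zero_iff _).2 (Nat.sInf_mem hne),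
    fun k hk => Nat.sInf_le ((G.sum_neg_one_pow_mul_choose_ne_zero_iff k).1 hk)⟩
end

section
/- Let G = (V,E) be a graph. Then, as an identity of rational functions (equivalently, of polynomials after clearing denominators), D(G,x) = (1+x)^{|V|} · ∑_{W ⊆ V} (−x/(1+x))^{|W|} · D(G[W], 1/x), where G[W] is the induced subgraph on W. -/
open Finset Polynomial

variable {V : Type*}

open scoped Classical in
/-- Evaluation of the domination polynomial at an element of a commutative ring. -/
noncomputable def domPolyAt [Fintype V] (H : SimpleGraph V) {R : Type*} [CommRing R]
    (x : R) : R :=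
  ∑ W ∈ Finset.univ.powerset.filter (fun W => dominates H W), x ^ W.card

/-! Expand `D(G[W], 1/x)` over the sets `T ⊆ W` whose closed neighbourhood `N[T]` contains `W`
and exchange the sums. For fixed `T` the sum over `T ⊆ W ⊆ N[T]` is a binomial sum, and with
`r = -x/(1+x)` it collapses to `(-1)^|T| (1+x)^|V \ N[T]|`. Expanding `(1+x)^|V \ N[T]|` and
exchanging the sums again, the coefficient of `x^|S|` is `∑_{T ⊆ V \ N[S]} (-1)^|T|`, because
`S` misses `N[T]` iff `T` misses `N[S]`; it is `1` if `S` dominates and `0` otherwise. -/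

open scoped Classical in
noncomputable def closedNbhd [Fintype V] (G : SimpleGraph V) (S : Finset V) : Finset V :=
  Finset.univ.filter fun v => v ∈ S ∨ ∃ u ∈ S, G.Adj u v

section closedNbhd

variable [Fintype V] (G : SimpleGraph V)

@[simp]
lemma mem_closedNbhd {S : Finset V} {v : V} :
    v ∈ closedNbhd G S ↔ v ∈ S ∨ ∃ u ∈ S, G.Adj u v := by
  simp [closedNbhd]

lemma subset_closedNbhd (S : Finset V) : S ⊆ closedNbhd G S :=
  fun _ hv => (mem_closedNbhd G).2 (Or.inl hv)

lemma closedNbhd_eq_univ_iff {S : Finset V} : closedNbhd G S = univ ↔ dominates G S := by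
  simp [Finset.eq_univ_iff_forall, dominates]

lemma subset_compl_closedNbhd_comm [DecidableEq V] {S T : Finset V} :
    S ⊆ (closedNbhd G T)ᶜ ↔ T ⊆ (closedNbhd G S)ᶜ := by
  simp only [subset_iff, mem_compl, mem_closedNbhd, not_or, not_exists, not_and]
  exact ⟨fun h t ht => ⟨fun hs => (h hs).1 ht, fun s hs hadj => (h hs).2 t ht hadj.symm⟩,
    fun h s hs => ⟨fun ht => (h ht).1 hs, fun t ht hadj => (h ht).2 s hs hadj.symm⟩⟩

end closedNbhd

namespace Finset

lemma sum_powerset_pow_card {ι R : Type*} [CommSemiring R] (s : Finset ι) (r : R) :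
    ∑ t ∈ s.powerset, r ^ #t = (r + 1) ^ #s := by
  simpa using sum_pow_mul_eq_add_pow r 1 s

lemma sum_Icc_pow_card {ι R : Type*} [DecidableEq ι] [CommSemiring R] {s t : Finset ι}
    (h : s ⊆ t) (r : R) : ∑ u ∈ Icc s t, r ^ #u = r ^ #s * (r + 1) ^ (#t - #s) := by
  have hdisj : ∀ u ∈ (t \ s).powerset, Disjoint s u := fun u hu =>
    disjoint_of_subset_right (mem_powerset.1 hu) disjoint_sdiff
  have hinj : Set.InjOn (s ∪ ·) (t \ s).powerset := fun a ha b hb (hab : s ∪ a = s ∪ b) => by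
    rw [← union_sdiff_cancel_left (hdisj a ha), hab, union_sdiff_cancel_left (hdisj b hb)]
  rw [Icc_eq_image_powerset h, sum_image hinj, ← card_sdiff_of_subset h,
    ← sum_powerset_pow_card, mul_sum]
  refine sum_congr rfl fun u hu => ?_
  rw [card_union_of_disjoint (hdisj u hu), pow_add]

end Finset

lemma dominates_induce_iff [Fintype V] (G : SimpleGraph V) {W : Finset V}
    (T : Finset (W : Set V)) :
    dominates (G.induce W) T ↔ W ⊆ closedNbhd G (T.map (Function.Embedding.subtype _)) := by
  simp +contextual [dominates, subset_iff]

lemma domPolyAt_induce [Fintype V] [DecidableEq V] (G : SimpleGraph V) (W : Finset V)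
    {R : Type*} [CommRing R] (y : R) :
    domPolyAt (G.induce (W : Set V)) y = ∑ T ∈ W.powerset with W ⊆ closedNbhd G T, y ^ #T := by
  classical
  refine sum_nbij (fun T => T.map (Function.Embedding.subtype _)) (fun T hT => ?_)
    (Finset.map_injective _).injOn (fun T hT => ?_) (fun T _ => by rw [card_map])
  · rw [mem_filter, dominates_induce_iff] at hT
    exact mem_filter.2 ⟨mem_powerset.2 fun v hv => by
      obtain ⟨w, -, rfl⟩ := mem_map.1 hv; exact w.2, hT.2⟩
  · obtain ⟨hTW, hdom⟩ := mem_filter.1 hT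
    have hmap : (T.subtype (· ∈ (W : Set V))).map (Function.Embedding.subtype _) = T :=
      subtype_map_of_mem fun v hv => mem_coe.2 (mem_powerset.1 hTW hv)
    refine ⟨T.subtype (· ∈ (W : Set V)), ?_, hmap⟩
    rw [mem_coe, mem_filter, dominates_induce_iff, hmap]
    exact ⟨mem_powerset.2 (subset_univ _), hdom⟩

lemma domPolyAt_eq_sum_closedNbhd [Fintype V] [DecidableEq V] (G : SimpleGraph V) {R : Type*}
    [CommRing R] (x : R) :
    domPolyAt G x = ∑ T : Finset V, (-1) ^ #T * (1 + x) ^ #(closedNbhd G T)ᶜ := by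
  classical
  calc domPolyAt G x = ∑ S : Finset V, x ^ #S * ∑ T ∈ (closedNbhd G S)ᶜ.powerset, (-1) ^ #T := by
        rw [domPolyAt, powerset_univ, sum_filter]
        refine sum_congr rfl fun S _ => ?_
        rw [sum_powerset_pow_card, neg_add_cancel, zero_pow_eq, mul_ite, mul_one, mul_zero]
        exact if_congr (by rw [Finset.card_eq_zero, compl_eq_empty_iff, closedNbhd_eq_univ_iff])
          rfl rfl
    _ = ∑ T : Finset V, (-1) ^ #T * ∑ S ∈ (closedNbhd G T)ᶜ.powerset, x ^ #S := by
        simp_rw [mul_sum, mul_comm (x ^ _)]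
        exact sum_comm' fun S T => by simp [subset_compl_closedNbhd_comm G]
    _ = _ := by simp_rw [sum_powerset_pow_card, add_comm x 1]

lemma one_add_pow_mul_sum_domPolyAt_induce [Fintype V] [DecidableEq V] (G : SimpleGraph V)
    {K : Type*} [Field K] {x : K} (hx : x ≠ 0) (hx1 : 1 + x ≠ 0) :
    (1 + x) ^ Fintype.card V * ∑ W : Finset V, (-x / (1 + x)) ^ #W * domPolyAt (G.induce W) x⁻¹
      = ∑ T : Finset V, (-1) ^ #T * (1 + x) ^ #(closedNbhd G T)ᶜ := by
  have hr1 : -x / (1 + x) + 1 = (1 + x)⁻¹ := by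
    field_simp
    ring
  calc _ = ∑ W : Finset V, ∑ T ∈ W.powerset with W ⊆ closedNbhd G T,
          (1 + x) ^ Fintype.card V * ((-x / (1 + x)) ^ #W * x⁻¹ ^ #T) := by
        simp_rw [domPolyAt_induce, mul_sum]
    _ = ∑ T : Finset V, ∑ W ∈ Icc T (closedNbhd G T),
          (1 + x) ^ Fintype.card V * ((-x / (1 + x)) ^ #W * x⁻¹ ^ #T) :=
        sum_comm' fun W T => by simp [and_comm]
    _ = ∑ T : Finset V, (1 + x) ^ Fintype.card V *
          ((-x / (1 + x)) ^ #T * (-x / (1 + x) + 1) ^ (#(closedNbhd G T) - #T) * x⁻¹ ^ #T) := by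
        simp_rw [← mul_sum, ← sum_mul, sum_Icc_pow_card (subset_closedNbhd G _)]
    _ = _ := sum_congr rfl fun T _ => by
        have hcard : Fintype.card V
            = #(closedNbhd G T)ᶜ + #T + (#(closedNbhd G T) - #T) := by
          rw [add_assoc, Nat.add_sub_cancel' (card_le_card (subset_closedNbhd G T)),
            card_compl_add_card]
        rw [hcard, hr1, div_pow, neg_pow x, inv_pow, inv_pow, pow_add, pow_add]
        field_simp

theorem stmt_18_general [Fintype V] (G : SimpleGraph V) :
    domPolyAt G (RatFunc.X : RatFunc ℚ)
      = (1 + RatFunc.X) ^ Fintype.card V *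
        ∑ W ∈ (Finset.univ : Finset V).powerset,
          (-RatFunc.X / (1 + RatFunc.X)) ^ W.card *
            domPolyAt (G.induce (↑W : Set V)) (RatFunc.X : RatFunc ℚ)⁻¹ := by
  classical
  have hX1 : 1 + (RatFunc.X : RatFunc ℚ) ≠ 0 := by
    simpa [RatFunc.algebraMap_X, add_comm] using
      RatFunc.algebraMap_ne_zero (K := ℚ) (X_add_C_ne_zero 1)
  rw [powerset_univ, one_add_pow_mul_sum_domPolyAt_induce G RatFunc.X_ne_zero hX1,
    domPolyAt_eq_sum_closedNbhd]

/-- as an identity of rational functions,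
`D(G,x) = (1+x)^{|V|} ∑_{W ⊆ V} (-x/(1+x))^{|W|} D(G[W], 1/x)`. -/
theorem stmt_18 [Fintype V] [DecidableEq V] (G : SimpleGraph V) :
    domPolyAt G (RatFunc.X : RatFunc ℚ)
      = (1 + RatFunc.X) ^ Fintype.card V *
        ∑ W ∈ (Finset.univ : Finset V).powerset,
          (-RatFunc.X / (1 + RatFunc.X)) ^ W.card *
            domPolyAt (G.induce (↑W : Set V)) (RatFunc.X : RatFunc ℚ)⁻¹ :=
  stmt_18_general G
end
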